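/- arXiv:1812.06602 — 8 statements merged into one kernel-verified Lean document; each statement's English description precedes it below -/
import Mathlib

section
/- For every real φ one has γ_2 φ = (ω_2 (h φ))⁻¹, γ_3 φ = − ω_3 (h φ) · (ω_2 (h φ))⁻³, and γ_4 φ = − ω_4 (h φ) · (ω_2 (h φ))⁻⁴ + 3 · (ω_3 (h φ))² · (ω_2 (h φ))⁻⁵ (paper eq. (0lege0a): the low-order vertex functions expressed through the cumulants). -/
/-- Paper eq. (0lege0a): the low-order derivatives of the zero-dimensional Legendre
transform `γ` (vertex functions) expressed through the derivatives of `ω` (cumulants). -/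
theorem legendre_low_order_derivatives
    (ω h : ℝ → ℝ) (hω : ContDiff ℝ (⊤ : ℕ∞) ω) (hh : ContDiff ℝ (⊤ : ℕ∞) h)
    (hinv₁ : ∀ φ : ℝ, deriv ω (h φ) = φ)
    (hinv₂ : ∀ x : ℝ, h (deriv ω x) = x)
    (γ : ℝ → ℝ) (hγ : ∀ φ : ℝ, γ φ = φ * h φ - ω (h φ))
    (hω₂ : ∀ φ : ℝ, iteratedDeriv 2 ω (h φ) ≠ 0) :
    (∀ φ : ℝ, iteratedDeriv 2 γ φ = (iteratedDeriv 2 ω (h φ))⁻¹) ∧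
    (∀ φ : ℝ, iteratedDeriv 3 γ φ =
      -(iteratedDeriv 3 ω (h φ)) * ((iteratedDeriv 2 ω (h φ))⁻¹) ^ 3) ∧
    (∀ φ : ℝ, iteratedDeriv 4 γ φ =
      -(iteratedDeriv 4 ω (h φ)) * ((iteratedDeriv 2 ω (h φ))⁻¹) ^ 4 +
        3 * (iteratedDeriv 3 ω (h φ)) ^ 2 * ((iteratedDeriv 2 ω (h φ))⁻¹) ^ 5) := by
  have hhd : Differentiable ℝ h := hh.differentiable (by simp)
  have hωn : ∀ n, Differentiable ℝ (iteratedDeriv n ω) := by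
    intro n
    rw [iteratedDeriv_eq_iterate]
    exact ((hω.of_le (by simp)).iterate_deriv n).differentiable (by simp)
  have hderivω : ∀ n x, HasDerivAt (iteratedDeriv n ω) (iteratedDeriv (n+1) ω x) x := by
    intro n x
    have h1 := ((hωn n) x).hasDerivAt
    rwa [show deriv (iteratedDeriv n ω) x = iteratedDeriv (n+1) ω x by
      rw [iteratedDeriv_succ]] at h1
  -- derivative of h
  have hh' : ∀ φ, HasDerivAt h ((iteratedDeriv 2 ω (h φ))⁻¹) φ := by
    intro φ
    have hc : HasDerivAt (fun ψ => deriv ω (h ψ))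
        (iteratedDeriv 2 ω (h φ) * deriv h φ) φ := by
      have := (hderivω 1 (h φ)).comp φ (hhd φ).hasDerivAt
      simp only [iteratedDeriv_one] at this
      exact this
    have hid : (fun ψ => deriv ω (h ψ)) = id := funext fun ψ => hinv₁ ψ
    rw [hid] at hc
    have huniq : iteratedDeriv 2 ω (h φ) * deriv h φ = 1 :=
      hc.unique (hasDerivAt_id φ)
    have hd : deriv h φ = (iteratedDeriv 2 ω (h φ))⁻¹ :=
      eq_inv_of_mul_eq_one_left (by linarith [huniq, mul_comm (iteratedDeriv 2 ω (h φ)) (deriv h φ)])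
    rw [← hd]; exact (hhd φ).hasDerivAt
  -- derivative of γ
  have hγ' : ∀ φ, HasDerivAt γ (h φ) φ := by
    intro φ
    have hωat : HasDerivAt ω φ (h φ) := by
      have := ((hω.differentiable (by simp)) (h φ)).hasDerivAt
      rwa [hinv₁ φ] at this
    have A := (hasDerivAt_id φ).fun_mul (hh' φ)
    have B := hωat.comp φ (hh' φ)
    have C := A.fun_sub B
    simp only [Function.comp_def, id_eq] at C
    have hγfun : γ = fun x => x * h x - ω (h x) := funext hγ
    rw [hγfun]
    exact C.congr_deriv (by ring)
  have hderivγ : deriv γ = h := funext fun φ => (hγ' φ).deriv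
  -- second derivative
  have d2 : ∀ φ, iteratedDeriv 2 γ φ = (iteratedDeriv 2 ω (h φ))⁻¹ := by
    intro φ
    rw [show (2:ℕ) = 1 + 1 from rfl, iteratedDeriv_succ, iteratedDeriv_one, hderivγ]
    exact (hh' φ).deriv
  have e2 : iteratedDeriv 2 γ = fun φ => (iteratedDeriv 2 ω (h φ))⁻¹ := funext d2
  -- hasDerivAt of φ ↦ (ω₂ (h φ))⁻¹
  have hv : ∀ φ, HasDerivAt (fun φ => (iteratedDeriv 2 ω (h φ))⁻¹)
      (-(iteratedDeriv 3 ω (h φ) * (iteratedDeriv 2 ω (h φ))⁻¹) /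
        (iteratedDeriv 2 ω (h φ)) ^ 2) φ := by
    intro φ
    have hg : HasDerivAt (fun φ => iteratedDeriv 2 ω (h φ))
        (iteratedDeriv 3 ω (h φ) * (iteratedDeriv 2 ω (h φ))⁻¹) φ :=
      (hderivω 2 (h φ)).comp φ (hh' φ)
    exact hg.inv (hω₂ φ)
  have d3 : ∀ φ, iteratedDeriv 3 γ φ =
      -(iteratedDeriv 3 ω (h φ)) * ((iteratedDeriv 2 ω (h φ))⁻¹) ^ 3 := by
    intro φ
    rw [show (3:ℕ) = 2 + 1 from rfl, iteratedDeriv_succ, e2]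
    rw [(hv φ).deriv]
    rw [div_eq_mul_inv, ← inv_pow]
    ring
  have e3 : iteratedDeriv 3 γ = fun φ =>
      -(iteratedDeriv 3 ω (h φ)) * ((iteratedDeriv 2 ω (h φ))⁻¹) ^ 3 := funext d3
  refine ⟨d2, d3, ?_⟩
  intro φ
  rw [show (4:ℕ) = 3 + 1 from rfl, iteratedDeriv_succ, e3]
  have hu : HasDerivAt (fun φ => -(iteratedDeriv 3 ω (h φ)))
      (-(iteratedDeriv 4 ω (h φ) * (iteratedDeriv 2 ω (h φ))⁻¹)) φ :=
    ((hderivω 3 (h φ)).comp φ (hh' φ)).neg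
  have hv3 : HasDerivAt (fun φ => ((iteratedDeriv 2 ω (h φ))⁻¹) ^ 3)
      (3 * ((iteratedDeriv 2 ω (h φ))⁻¹) ^ 2 *
        (-(iteratedDeriv 3 ω (h φ) * (iteratedDeriv 2 ω (h φ))⁻¹) /
          (iteratedDeriv 2 ω (h φ)) ^ 2)) φ := by
    simpa using (hv φ).fun_pow 3
  have hprod := hu.fun_mul hv3
  rw [hprod.deriv]
  simp only [div_eq_mul_inv, ← inv_pow]
  ring
end

section
/- Define ω̃ x = ω (λ * x), h̃ ψ = h (ψ / λ) / λ, and γ̃ ψ = ψ * h̃ ψ − ω̃ (h̃ ψ). Then deriv ω̃ (h̃ ψ) = ψ for every ψ, the rescaled Legendre transform satisfies γ̃ ψ = γ (ψ / λ) for every ψ, and consequently for every m ≥ 0 and every real φ, iteratedDeriv m γ̃ (λ * φ) = λ^(−m) · iteratedDeriv m γ φ. (This is the zero-dimensional form of part (a) of the degree Lemma: under the grading deg ω_m = m one has deg γ_m = −m.) -/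
/-- Zero-dimensional form of part (a) of the degree Lemma: under the rescaling
`ω̃ x = ω (λ x)`, `h̃ ψ = h (ψ/λ)/λ`, the rescaled Legendre transform satisfies
`γ̃ ψ = γ (ψ/λ)`, `deriv ω̃ (h̃ ψ) = ψ`, and `iteratedDeriv m γ̃ (λ φ) = λ^(-m) ·
iteratedDeriv m γ φ` (i.e. `deg γ_m = -m` when `deg ω_m = m`). -/
theorem legendre_degree_grading
    (ω h : ℝ → ℝ) (hω : ContDiff ℝ (⊤ : ℕ∞) ω) (hh : ContDiff ℝ (⊤ : ℕ∞) h)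
    (hinv₁ : ∀ φ : ℝ, deriv ω (h φ) = φ)
    (hinv₂ : ∀ x : ℝ, h (deriv ω x) = x)
    (γ : ℝ → ℝ) (hγ : ∀ φ : ℝ, γ φ = φ * h φ - ω (h φ))
    (lam : ℝ) (hlam : lam ≠ 0)
    (ω' h' γ' : ℝ → ℝ)
    (hω' : ∀ x : ℝ, ω' x = ω (lam * x))
    (hh' : ∀ ψ : ℝ, h' ψ = h (ψ / lam) / lam)
    (hγ' : ∀ ψ : ℝ, γ' ψ = ψ * h' ψ - ω' (h' ψ)) :
    (∀ ψ : ℝ, deriv ω' (h' ψ) = ψ) ∧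
    (∀ ψ : ℝ, γ' ψ = γ (ψ / lam)) ∧
    (∀ (m : ℕ) (φ : ℝ),
      iteratedDeriv m γ' (lam * φ) = lam ^ (-(m : ℤ)) * iteratedDeriv m γ φ) := by
  have hωfun : ω' = fun x => ω (lam * x) := funext hω'
  have hderiv : ∀ y : ℝ, deriv ω' y = lam * deriv ω (lam * y) := by
    intro y
    have h1 := iteratedDeriv_comp_const_mul (n := 1) (hω.of_le (by simp)) lam
    have := congrFun h1 y
    simpa [hωfun, iteratedDeriv_one] using this
  have part1 : ∀ ψ : ℝ, deriv ω' (h' ψ) = ψ := by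
    intro ψ
    rw [hderiv, hh']
    rw [mul_div_cancel₀ _ hlam, hinv₁, mul_div_cancel₀ _ hlam]
  have part2 : ∀ ψ : ℝ, γ' ψ = γ (ψ / lam) := by
    intro ψ
    rw [hγ', hγ, hh', hω', mul_div_cancel₀ _ hlam]
    field_simp
  refine ⟨part1, part2, ?_⟩
  intro m φ
  have hγc : ContDiff ℝ (m : ℕ∞) γ := by
    have : γ = fun φ => φ * h φ - ω (h φ) := funext hγ
    rw [this]
    exact ((contDiff_id.mul hh).sub (hω.comp hh)).of_le (by exact_mod_cast le_top)
  have hfun : γ' = fun ψ => γ (lam⁻¹ * ψ) := by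
    funext ψ
    rw [part2, div_eq_inv_mul]
  have h1 := congrFun (iteratedDeriv_comp_const_mul (n := m) hγc lam⁻¹) (lam * φ)
  rw [hfun, h1, inv_mul_cancel_left₀ hlam]
  rw [zpow_neg, zpow_natCast, inv_pow]
end

section
/- For every integer l ≥ 3 and every real φ, the mixed recursion (paper eq. (0Lprf4)) holds: iteratedDeriv l γ φ = − ∑_{j=2}^{l} ω_j (h φ) · (l! / j!) · ∑_{(k_1,…,k_j)} ∏_{i=1}^{j} (iteratedDeriv (k_i) h φ) / k_i!, where the inner sum ranges over all ordered j-tuples of integers (k_1, …, k_j) with 1 ≤ k_i ≤ l − 2 for each i and k_1 + ⋯ + k_j = l. -/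
open Finset Fintype

namespace LegendreAux

/-- normalized derivative -/
noncomputable def G (g : ℝ → ℝ) (m : ℕ) (φ : ℝ) : ℝ :=
  iteratedDeriv m g φ / (m.factorial : ℝ)

/-- index set: ordered `j`-tuples with entries in `[1,N]` summing to `l`. -/
def T (j l N : ℕ) : Finset (Fin j → ℕ) :=
  (Fintype.piFinset fun _ : Fin j => Finset.Icc 1 N).filter fun k => ∑ i, k i = l

noncomputable def S (g : ℝ → ℝ) (j l N : ℕ) (φ : ℝ) : ℝ :=
  ∑ k ∈ T j l N, ∏ i, G g (k i) φ

noncomputable def D (g : ℝ → ℝ) (j l : ℕ) (φ : ℝ) : ℝ :=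
  ∑ k ∈ T j l l, ∑ i, (∏ i' ∈ Finset.univ.erase i, G g (k i') φ) *
    (iteratedDeriv (k i + 1) g φ / ((k i).factorial : ℝ))

lemma mem_T {j l N : ℕ} {k : Fin j → ℕ} :
    k ∈ T j l N ↔ (∀ i, 1 ≤ k i ∧ k i ≤ N) ∧ ∑ i, k i = l := by
  simp [T, Fintype.mem_piFinset, Finset.mem_Icc, Finset.mem_filter, forall_and]

lemma pair_le_sum {j : ℕ} (k : Fin j → ℕ) {a b : Fin j} (hab : a ≠ b) :
    k a + k b ≤ ∑ i, k i := by
  have hb : ∑ i ∈ Finset.univ.erase b, k i + k b = ∑ i, k i :=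
    Finset.sum_erase_add _ _ (Finset.mem_univ b)
  have ha : k a ≤ ∑ i ∈ Finset.univ.erase b, k i :=
    Finset.single_le_sum (fun i _ => Nat.zero_le _)
      (Finset.mem_erase.2 ⟨hab, Finset.mem_univ a⟩)
  omega

lemma mem_T_bound {j l N : ℕ} {k : Fin j → ℕ} (hk : k ∈ T j l N) (i : Fin j) :
    k i + j ≤ l + 1 := by
  obtain ⟨h1, h2⟩ := mem_T.1 hk
  have hcs : (Finset.univ.erase i).card • 1 ≤ ∑ i' ∈ Finset.univ.erase i, k i' :=
    Finset.card_nsmul_le_sum _ _ _ (fun i' _ => (h1 i').1)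
  have hs : ∑ i' ∈ Finset.univ.erase i, k i' + k i = l :=
    (Finset.sum_erase_add _ _ (Finset.mem_univ i)).trans h2
  have hcard : (Finset.univ.erase i).card = j - 1 := by
    simp [Finset.card_erase_of_mem]
  have hj : 1 ≤ j := i.pos
  simp only [smul_eq_mul, mul_one, hcard] at hcs
  omega

lemma T_eq {j l N M : ℕ} (hN : l + 1 ≤ N + j) (hM : l + 1 ≤ M + j) :
    T j l N = T j l M := by
  ext k
  simp only [mem_T]
  constructor <;> rintro ⟨h1, h2⟩ <;>
    refine ⟨fun i => ⟨(h1 i).1, ?_⟩, h2⟩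
  · have := mem_T_bound (mem_T.2 ⟨h1, h2⟩) i; omega
  · have := mem_T_bound (mem_T.2 ⟨h1, h2⟩) i; omega

lemma T_empty_of_lt {j l N : ℕ} (h : l < j) : T j l N = ∅ := by
  ext k
  simp only [mem_T, Finset.notMem_empty, iff_false, not_and]
  intro h1 h2
  have hj : j ≤ l := by
    calc j = (Finset.univ : Finset (Fin j)).card * 1 := by simp
      _ ≤ ∑ i, k i := by
          rw [← smul_eq_mul]
          exact Finset.card_nsmul_le_sum _ _ _ (fun i _ => (h1 i).1)
      _ = l := h2
  omega

lemma T_zero {l N : ℕ} (hl : 1 ≤ l) : T 0 l N = ∅ := by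
  ext k
  simp only [mem_T, Finset.notMem_empty, iff_false, not_and]
  intro _ h2
  simp only [Finset.univ_eq_empty, Finset.sum_empty] at h2
  omega

lemma T_one {l : ℕ} (hl : 1 ≤ l) : T 1 l l = {fun _ => l} := by
  ext k
  simp only [mem_T, Finset.mem_singleton, Fin.sum_univ_one]
  constructor
  · rintro ⟨h1, h2⟩
    funext i
    have : i = 0 := Subsingleton.elim _ _
    rw [this, h2]
  · rintro rfl
    exact ⟨fun i => ⟨hl, le_rfl⟩, rfl⟩


section Deriv
variable {g : ℝ → ℝ}

lemma hasDerivAt_iter (hg : ContDiff ℝ (⊤ : ℕ∞) g) (m : ℕ) (φ : ℝ) :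
    HasDerivAt (iteratedDeriv m g) (iteratedDeriv (m + 1) g φ) φ := by
  rw [iteratedDeriv_succ]
  exact ((hg.differentiable_iteratedDeriv m (by exact_mod_cast ENat.coe_lt_top m)) φ).hasDerivAt

lemma hasDerivAt_G (hg : ContDiff ℝ (⊤ : ℕ∞) g) (m : ℕ) (φ : ℝ) :
    HasDerivAt (G g m) (iteratedDeriv (m + 1) g φ / (m.factorial : ℝ)) φ :=
  (hasDerivAt_iter hg m φ).div_const _

lemma hasDerivAt_S (hg : ContDiff ℝ (⊤ : ℕ∞) g) (j l : ℕ) (φ : ℝ) :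
    HasDerivAt (S g j l l) (D g j l φ) φ := by
  have : HasDerivAt (fun ψ => ∑ k ∈ T j l l, ∏ i, G g (k i) ψ) (D g j l φ) φ := by
    apply HasDerivAt.fun_sum
    intro k _
    have h := HasDerivAt.fun_finsetProd (u := Finset.univ)
      (f := fun i ψ => G g (k i) ψ)
      (f' := fun i => iteratedDeriv (k i + 1) g φ / ((k i).factorial : ℝ))
      (x := φ) (fun i _ => hasDerivAt_G hg (k i) φ)
    simpa [smul_eq_mul] using h
  exact this

lemma claimA (m l : ℕ) (φ : ℝ) :
    ((m : ℝ) + 1) * deriv g φ * S g m l l φ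
      = ∑ k ∈ T (m + 1) (l + 1) (l + 1),
          ∑ i ∈ Finset.univ.filter (fun i => k i = 1), ∏ i', G g (k i') φ := by
  have hL : ((m : ℝ) + 1) * deriv g φ * S g m l l φ
      = ∑ _i : Fin (m + 1), ∑ k ∈ T m l l, deriv g φ * ∏ i', G g (k i') φ := by
    simp only [S, Finset.mul_sum, Finset.sum_const, Finset.card_univ, Fintype.card_fin,
      nsmul_eq_mul]
    push_cast
    exact Finset.sum_congr rfl fun k _ => by ring
  rw [hL, Finset.sum_sigma' (Finset.univ : Finset (Fin (m+1))) (fun _ => T m l l),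
    Finset.sum_sigma' (T (m + 1) (l + 1) (l + 1))
      (fun k => Finset.univ.filter (fun i => k i = 1))]
  refine Finset.sum_nbij' (fun p => ⟨p.1.insertNth 1 p.2, p.1⟩)
    (fun q => ⟨q.2, q.2.removeNth q.1⟩) ?_ ?_ ?_ ?_ ?_
  · rintro ⟨i, k⟩ hp
    simp only [Finset.mem_sigma, Finset.mem_univ, true_and] at hp ⊢
    obtain ⟨h1, h2⟩ := mem_T.1 hp
    refine ⟨mem_T.2 ⟨?_, ?_⟩, ?_⟩
    · intro a
      by_cases ha : a = i
      · subst ha; rw [Fin.insertNth_apply_same]; omega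
      · obtain ⟨b, rfl⟩ := Fin.exists_succAbove_eq ha
        rw [Fin.insertNth_apply_succAbove]
        have := h1 b; omega
    · rw [Fin.sum_univ_succAbove (fun a => i.insertNth 1 k a) i,
        Fin.insertNth_apply_same]
      simp only [Fin.insertNth_apply_succAbove]
      omega
    · simp [Fin.insertNth_apply_same]
  · rintro ⟨k', i⟩ hq
    simp only [Finset.mem_sigma, Finset.mem_filter, Finset.mem_univ, true_and] at hq
    obtain ⟨hk', hi⟩ := hq
    obtain ⟨h1, h2⟩ := mem_T.1 hk'
    have hsum : k' i + ∑ b, k' (i.succAbove b) = l + 1 := by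
      rw [← Fin.sum_univ_succAbove k' i]; exact h2
    refine Finset.mem_sigma.2 ⟨Finset.mem_univ _, mem_T.2 ⟨?_, ?_⟩⟩
    · intro b
      have hp := pair_le_sum k' (a := i.succAbove b) (b := i) (Fin.succAbove_ne i b)
      rw [h2] at hp
      have := (h1 (i.succAbove b)).1
      constructor
      · exact this
      · simp only [Fin.removeNth] at *
        omega
    · simp only [Fin.removeNth]
      omega
  · rintro ⟨i, k⟩ hp
    simp [Fin.removeNth_insertNth]
  · rintro ⟨k', i⟩ hq
    simp only [Finset.mem_sigma, Finset.mem_filter, Finset.mem_univ, true_and] at hq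
    obtain ⟨hk', hi⟩ := hq
    have h3 := Fin.insertNth_self_removeNth i k'
    rw [hi] at h3
    simp [h3]
  · rintro ⟨i, k⟩ hp
    dsimp only
    rw [Fin.prod_univ_succAbove (fun a => G g (Fin.insertNth (α := fun _ => ℕ) i 1 k a) φ) i,
      Fin.insertNth_apply_same]
    simp only [Fin.insertNth_apply_succAbove]
    congr 1
    simp [G, iteratedDeriv_one]

lemma claimB (m l : ℕ) (φ : ℝ) :
    ∑ k ∈ T (m + 1) l l, ∑ i, (∏ i' ∈ Finset.univ.erase i, G g (k i') φ) *
        (iteratedDeriv (k i + 1) g φ / ((k i).factorial : ℝ))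
      = ∑ k ∈ T (m + 1) (l + 1) (l + 1),
          ∑ i ∈ Finset.univ.filter (fun i => k i ≠ 1),
            (k i : ℝ) * ∏ i', G g (k i') φ := by
  rw [Finset.sum_sigma' (T (m + 1) l l) (fun _ => (Finset.univ : Finset (Fin (m + 1)))),
    Finset.sum_sigma' (T (m + 1) (l + 1) (l + 1))
      (fun k => Finset.univ.filter (fun i => k i ≠ 1))]
  refine Finset.sum_nbij' (fun p => ⟨Function.update p.1 p.2 (p.1 p.2 + 1), p.2⟩)
    (fun q => ⟨Function.update q.1 q.2 (q.1 q.2 - 1), q.2⟩) ?_ ?_ ?_ ?_ ?_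
  · rintro ⟨k, i⟩ hp
    simp only [Finset.mem_sigma, Finset.mem_univ, and_true, true_and,
      Finset.mem_filter] at hp ⊢
    obtain ⟨h1, h2⟩ := mem_T.1 hp
    have hsum : ∑ a, Function.update k i (k i + 1) a = l + 1 := by
      rw [Finset.sum_update_of_mem (Finset.mem_univ i), Finset.sdiff_singleton_eq_erase]
      have : ∑ a ∈ Finset.univ.erase i, k a + k i = l :=
        (Finset.sum_erase_add _ _ (Finset.mem_univ i)).trans h2
      omega
    refine ⟨mem_T.2 ⟨?_, hsum⟩, ?_⟩
    · intro a
      by_cases ha : a = i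
      · subst ha; rw [Function.update_self]; have := h1 a; omega
      · rw [Function.update_of_ne ha]; have := h1 a; omega
    · rw [Function.update_self]; have := (h1 i).1; omega
  · rintro ⟨k', i⟩ hq
    simp only [Finset.mem_sigma, Finset.mem_univ, and_true, true_and,
      Finset.mem_filter] at hq ⊢
    obtain ⟨hk', hi⟩ := hq
    obtain ⟨h1, h2⟩ := mem_T.1 hk'
    have hki : 2 ≤ k' i := by have := (h1 i).1; omega
    have hsum : ∑ a, Function.update k' i (k' i - 1) a = l := by
      rw [Finset.sum_update_of_mem (Finset.mem_univ i), Finset.sdiff_singleton_eq_erase]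
      have : ∑ a ∈ Finset.univ.erase i, k' a + k' i = l + 1 :=
        (Finset.sum_erase_add _ _ (Finset.mem_univ i)).trans h2
      omega
    refine mem_T.2 ⟨?_, hsum⟩
    intro a
    by_cases ha : a = i
    · subst ha; rw [Function.update_self]; have := (h1 a).2; omega
    · rw [Function.update_of_ne ha]
      have hp := pair_le_sum k' (a := a) (b := i) ha
      rw [h2] at hp
      have := (h1 a).1
      omega
  · rintro ⟨k, i⟩ hp
    simp only [Function.update_idem, Function.update_self, Nat.add_sub_cancel]
    congr 1
    exact Function.update_eq_self i k
  · rintro ⟨k', i⟩ hq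
    simp only [Finset.mem_sigma, Finset.mem_univ, and_true, true_and,
      Finset.mem_filter] at hq
    obtain ⟨hk', hi⟩ := hq
    have hki : 1 ≤ k' i := ((mem_T.1 hk').1 i).1
    simp only [Function.update_idem, Function.update_self]
    have : k' i - 1 + 1 = k' i := by omega
    rw [this]
    congr 1
    exact Function.update_eq_self i k'
  · rintro ⟨k, i⟩ hp
    simp only [Finset.mem_sigma, Finset.mem_univ, and_true] at hp
    obtain ⟨h1, h2⟩ := mem_T.1 hp
    dsimp only
    rw [Function.update_self,
      ← Finset.mul_prod_erase Finset.univ (fun a => G g (Function.update k i (k i + 1) a) φ)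
        (Finset.mem_univ i)]
    rw [Function.update_self]
    have hprod : ∏ a ∈ Finset.univ.erase i, G g (Function.update k i (k i + 1) a) φ
        = ∏ a ∈ Finset.univ.erase i, G g (k a) φ := by
      refine Finset.prod_congr rfl fun a ha => ?_
      rw [Function.update_of_ne (Finset.mem_erase.1 ha).1]
    rw [hprod]
    have hfac : ((k i + 1).factorial : ℝ) = ((k i : ℝ) + 1) * ((k i).factorial : ℝ) := by
      rw [Nat.factorial_succ]; push_cast; ring
    have hne : ((k i).factorial : ℝ) ≠ 0 := Nat.cast_ne_zero.2 (Nat.factorial_ne_zero _)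
    simp only [G, hfac]
    push_cast
    field_simp

lemma key (m l : ℕ) (φ : ℝ) :
    ((l : ℝ) + 1) * S g (m + 1) (l + 1) (l + 1) φ
      = ((m : ℝ) + 1) * deriv g φ * S g m l l φ
        + ∑ k ∈ T (m + 1) l l, ∑ i, (∏ i' ∈ Finset.univ.erase i, G g (k i') φ) *
            (iteratedDeriv (k i + 1) g φ / ((k i).factorial : ℝ)) := by
  rw [claimA, claimB, ← Finset.sum_add_distrib]
  simp only [S]
  rw [Finset.mul_sum]
  refine Finset.sum_congr rfl fun k hk => ?_
  obtain ⟨h1, h2⟩ := mem_T.1 hk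
  have hcoe : ∑ i, (k i : ℝ) = (l : ℝ) + 1 := by
    rw [← Nat.cast_sum, h2]; push_cast; ring
  calc ((l : ℝ) + 1) * ∏ i', G g (k i') φ
      = ∑ i, (k i : ℝ) * ∏ i', G g (k i') φ := by
        rw [← Finset.sum_mul, hcoe]
    _ = (∑ i ∈ Finset.univ.filter (fun i => k i = 1), (k i : ℝ) * ∏ i', G g (k i') φ)
        + ∑ i ∈ Finset.univ.filter (fun i => k i ≠ 1), (k i : ℝ) * ∏ i', G g (k i') φ := by
        rw [Finset.sum_filter_add_sum_filter_not]
    _ = (∑ i ∈ Finset.univ.filter (fun i => k i = 1), ∏ i', G g (k i') φ)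
        + ∑ i ∈ Finset.univ.filter (fun i => k i ≠ 1), (k i : ℝ) * ∏ i', G g (k i') φ := by
        congr 1
        refine Finset.sum_congr rfl fun i hi => ?_
        have : k i = 1 := (Finset.mem_filter.1 hi).2
        rw [this]; push_cast; ring


lemma faa (f : ℝ → ℝ) (hf : ContDiff ℝ (⊤ : ℕ∞) f) (hg : ContDiff ℝ (⊤ : ℕ∞) g) (l : ℕ) (hl : 1 ≤ l) :
    ∀ φ : ℝ, iteratedDeriv l (f ∘ g) φ
      = ∑ j ∈ Finset.Icc 1 l, iteratedDeriv j f (g φ) *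
          ((l.factorial : ℝ) / (j.factorial : ℝ)) * S g j l l φ := by
  induction l, hl using Nat.le_induction with
  | base =>
    intro φ
    have hd : HasDerivAt (f ∘ g) (deriv f (g φ) * deriv g φ) φ :=
      (((hf.differentiable (by simp)) (g φ)).hasDerivAt).comp φ
        (((hg.differentiable (by simp)) φ).hasDerivAt)
    rw [iteratedDeriv_one, hd.deriv, show Finset.Icc 1 1 = {1} from Finset.Icc_self 1,
      Finset.sum_singleton, S, T_one le_rfl, Finset.sum_singleton]
    simp [G, iteratedDeriv_one]
  | succ l hl IH =>
    intro φ
    have hfun : iteratedDeriv l (f ∘ g) = fun ψ =>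
        ∑ j ∈ Finset.Icc 1 l, iteratedDeriv j f (g ψ) *
          ((l.factorial : ℝ) / (j.factorial : ℝ)) * S g j l l ψ := funext IH
    rw [iteratedDeriv_succ, hfun]
    have hD : HasDerivAt (fun ψ => ∑ j ∈ Finset.Icc 1 l, iteratedDeriv j f (g ψ) *
          ((l.factorial : ℝ) / (j.factorial : ℝ)) * S g j l l ψ)
        (∑ j ∈ Finset.Icc 1 l,
          ((iteratedDeriv (j + 1) f (g φ) * deriv g φ * ((l.factorial : ℝ) / (j.factorial : ℝ)))
              * S g j l l φ
            + (iteratedDeriv j f (g φ) * ((l.factorial : ℝ) / (j.factorial : ℝ)))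
              * D g j l φ)) φ := by
      apply HasDerivAt.fun_sum
      intro j _
      have h1 : HasDerivAt (fun ψ => iteratedDeriv j f (g ψ))
          (iteratedDeriv (j + 1) f (g φ) * deriv g φ) φ := by
        have := (hasDerivAt_iter hf j (g φ)).comp φ (((hg.differentiable (by simp)) φ).hasDerivAt)
        exact this
      exact (h1.mul_const _).mul (hasDerivAt_S hg j l φ)
    rw [hD.deriv]
    have hper : ∀ j : ℕ, 1 ≤ j →
        iteratedDeriv j f (g φ) * (((l + 1).factorial : ℝ) / (j.factorial : ℝ))
            * S g j (l + 1) (l + 1) φ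
        = iteratedDeriv j f (g φ) * ((l.factorial : ℝ) / ((j - 1).factorial : ℝ))
            * (deriv g φ * S g (j - 1) l l φ)
          + (iteratedDeriv j f (g φ) * ((l.factorial : ℝ) / (j.factorial : ℝ))) * D g j l φ := by
      intro j hj
      obtain ⟨m, rfl⟩ : ∃ m, j = m + 1 := ⟨j - 1, by omega⟩
      simp only [Nat.add_sub_cancel]
      have hDdef : D g (m + 1) l φ
          = ∑ k ∈ T (m + 1) l l, ∑ i, (∏ i' ∈ Finset.univ.erase i, G g (k i') φ) *
              (iteratedDeriv (k i + 1) g φ / ((k i).factorial : ℝ)) := rfl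
      have hkey := key (g := g) m l φ
      rw [← hDdef] at hkey
      have hfac1 : (((l + 1).factorial : ℕ) : ℝ) = ((l : ℝ) + 1) * (l.factorial : ℝ) := by
        rw [Nat.factorial_succ]; push_cast; ring
      have hfac2 : (((m + 1).factorial : ℕ) : ℝ) = ((m : ℝ) + 1) * (m.factorial : ℝ) := by
        rw [Nat.factorial_succ]; push_cast; ring
      have hm : (m.factorial : ℝ) ≠ 0 := Nat.cast_ne_zero.2 (Nat.factorial_ne_zero _)
      have hm1 : ((m : ℝ) + 1) ≠ 0 := by positivity
      calc iteratedDeriv (m + 1) f (g φ) * (((l + 1).factorial : ℝ) / ((m + 1).factorial : ℝ))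
              * S g (m + 1) (l + 1) (l + 1) φ
          = iteratedDeriv (m + 1) f (g φ) * ((l.factorial : ℝ) / ((m + 1).factorial : ℝ))
              * (((l : ℝ) + 1) * S g (m + 1) (l + 1) (l + 1) φ) := by
            rw [hfac1]; ring
        _ = iteratedDeriv (m + 1) f (g φ) * ((l.factorial : ℝ) / ((m + 1).factorial : ℝ))
              * (((m : ℝ) + 1) * deriv g φ * S g m l l φ + D g (m + 1) l φ) := by
            rw [hkey]
        _ = iteratedDeriv (m + 1) f (g φ) * ((l.factorial : ℝ) / (m.factorial : ℝ))
              * (deriv g φ * S g m l l φ)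
            + (iteratedDeriv (m + 1) f (g φ)
                * ((l.factorial : ℝ) / ((m + 1).factorial : ℝ))) * D g (m + 1) l φ := by
            rw [hfac2]; field_simp
    have h1 : ∑ j ∈ Finset.Icc 1 (l + 1), iteratedDeriv j f (g φ) *
          (((l + 1).factorial : ℝ) / (j.factorial : ℝ)) * S g j (l + 1) (l + 1) φ
        = ∑ j ∈ Finset.Icc 1 (l + 1),
            (iteratedDeriv j f (g φ) * ((l.factorial : ℝ) / ((j - 1).factorial : ℝ))
              * (deriv g φ * S g (j - 1) l l φ)
            + (iteratedDeriv j f (g φ) * ((l.factorial : ℝ) / (j.factorial : ℝ)))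
              * D g j l φ) :=
      Finset.sum_congr rfl fun j hj => hper j (Finset.mem_Icc.1 hj).1
    have h2 : ∑ j ∈ Finset.Icc 1 (l + 1),
          (iteratedDeriv j f (g φ) * ((l.factorial : ℝ) / (j.factorial : ℝ))) * D g j l φ
        = ∑ j ∈ Finset.Icc 1 l,
          (iteratedDeriv j f (g φ) * ((l.factorial : ℝ) / (j.factorial : ℝ))) * D g j l φ := by
      rw [Finset.sum_Icc_succ_top (by omega : 1 ≤ l + 1)]
      have : D g (l + 1) l φ = 0 := by
        simp [D, T_empty_of_lt (Nat.lt_succ_self l)]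
      rw [this]
      ring
    have h3 : ∑ j ∈ Finset.Icc 1 (l + 1),
          iteratedDeriv j f (g φ) * ((l.factorial : ℝ) / ((j - 1).factorial : ℝ))
            * (deriv g φ * S g (j - 1) l l φ)
        = ∑ j ∈ Finset.Icc 0 l,
          iteratedDeriv (j + 1) f (g φ) * ((l.factorial : ℝ) / (j.factorial : ℝ))
            * (deriv g φ * S g j l l φ) := by
      rw [show Finset.Icc 1 (l + 1) = (Finset.Icc 0 l).map (addRightEmbedding 1) by
        rw [Finset.map_add_right_Icc], Finset.sum_map]
      refine Finset.sum_congr rfl fun j _ => ?_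
      simp [addRightEmbedding]
    have h4 : ∑ j ∈ Finset.Icc 0 l,
          iteratedDeriv (j + 1) f (g φ) * ((l.factorial : ℝ) / (j.factorial : ℝ))
            * (deriv g φ * S g j l l φ)
        = ∑ j ∈ Finset.Icc 1 l,
          iteratedDeriv (j + 1) f (g φ) * ((l.factorial : ℝ) / (j.factorial : ℝ))
            * (deriv g φ * S g j l l φ) := by
      rw [show Finset.Icc 0 l = insert 0 (Finset.Icc 1 l) by
          ext x; simp [Finset.mem_Icc, Finset.mem_insert]; omega,
        Finset.sum_insert (by simp)]
      have : S g 0 l l φ = 0 := by simp [S, T_zero hl]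
      rw [this]
      ring
    rw [h1, Finset.sum_add_distrib, Finset.sum_add_distrib, h2, h3, h4]
    congr 1
    refine Finset.sum_congr rfl fun j _ => ?_
    ring


lemma iteratedDeriv_sub' {f g : ℝ → ℝ} (hf : ContDiff ℝ (⊤ : ℕ∞) f) (hg : ContDiff ℝ (⊤ : ℕ∞) g)
    (n : ℕ) (φ : ℝ) :
    iteratedDeriv n (fun x => f x - g x) φ = iteratedDeriv n f φ - iteratedDeriv n g φ := by
  have hadd : ∀ (f g : ℝ → ℝ), ContDiff ℝ (⊤ : ℕ∞) f → ContDiff ℝ (⊤ : ℕ∞) g →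
      iteratedDeriv n (fun x => f x + g x) φ = iteratedDeriv n f φ + iteratedDeriv n g φ := by
    intro f g hf hg
    simp only [iteratedDeriv_eq_iteratedFDeriv]
    have heq : (fun x => f x + g x) = f + g := rfl
    rw [heq, iteratedFDeriv_add_apply (hf.of_le (by exact_mod_cast le_top)).contDiffAt (hg.of_le (by exact_mod_cast le_top)).contDiffAt]
    simp
  have := hadd f (fun x => -g x) hf hg.neg
  simpa [iteratedDeriv_neg, sub_eq_add_neg] using this

lemma idmul {h : ℝ → ℝ} (hh : ContDiff ℝ (⊤ : ℕ∞) h) :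
    ∀ (m : ℕ) (φ : ℝ), iteratedDeriv (m + 1) (fun x => x * h x) φ
      = φ * iteratedDeriv (m + 1) h φ + ((m : ℝ) + 1) * iteratedDeriv m h φ := by
  intro m
  induction m with
  | zero =>
    intro φ
    have hd : HasDerivAt (fun x : ℝ => x * h x) (1 * h φ + φ * deriv h φ) φ :=
      (hasDerivAt_id φ).mul ((hh.differentiable (by simp) φ).hasDerivAt)
    rw [iteratedDeriv_one, hd.deriv]
    simp [iteratedDeriv_one, iteratedDeriv_zero]
    ring
  | succ m IH =>
    intro φ
    rw [iteratedDeriv_succ, funext IH]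
    have hd : HasDerivAt
        (fun ψ => ψ * iteratedDeriv (m + 1) h ψ + ((m : ℝ) + 1) * iteratedDeriv m h ψ)
        ((1 * iteratedDeriv (m + 1) h φ + φ * iteratedDeriv (m + 1 + 1) h φ)
          + ((m : ℝ) + 1) * iteratedDeriv (m + 1) h φ) φ :=
      ((hasDerivAt_id φ).mul (hasDerivAt_iter hh (m + 1) φ)).add
        (HasDerivAt.const_mul ((m : ℝ) + 1) (hasDerivAt_iter hh m φ))
    rw [hd.deriv]
    push_cast
    ring

lemma T2_subset {l : ℕ} : T 2 l (l - 2) ⊆ T 2 l l := by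
  intro k hk
  obtain ⟨h1, h2⟩ := mem_T.1 hk
  exact mem_T.2 ⟨fun i => ⟨(h1 i).1, le_trans (h1 i).2 (by omega)⟩, h2⟩

lemma T2_sdiff {l : ℕ} (hl : 3 ≤ l) :
    T 2 l l \ T 2 l (l - 2) = {![1, l - 1], ![l - 1, 1]} := by
  ext k
  simp only [Finset.mem_sdiff, mem_T, Finset.mem_insert, Finset.mem_singleton,
    Fin.sum_univ_two]
  constructor
  · rintro ⟨⟨h1, h2⟩, h3⟩
    have h4 : ¬ (∀ i, 1 ≤ k i ∧ k i ≤ l - 2) := by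
      intro hc
      exact h3 ⟨hc, h2⟩
    push_neg at h4
    obtain ⟨i, hi⟩ := h4
    have hk0 := h1 0
    have hk1 := h1 1
    have hdisj : (k 0 = 1 ∧ k 1 = l - 1) ∨ (k 0 = l - 1 ∧ k 1 = 1) := by
      have hi1 := hi (h1 i).1
      obtain ⟨v, hv⟩ := i
      interval_cases v <;> simp only [Fin.mk_zero, Fin.mk_one] at hi1 <;> omega
    rcases hdisj with ⟨ha, hb⟩ | ⟨ha, hb⟩
    · left; funext i; fin_cases i <;> simp [ha, hb]
    · right; funext i; fin_cases i <;> simp [ha, hb]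
  · rintro (rfl | rfl)
    · refine ⟨⟨fun i => ?_, ?_⟩, ?_⟩
      · fin_cases i <;> simp <;> omega
      · simp; omega
      · rintro ⟨hc, -⟩
        have := (hc 1).2
        simp at this
        omega
    · refine ⟨⟨fun i => ?_, ?_⟩, ?_⟩
      · fin_cases i <;> simp <;> omega
      · simp; omega
      · rintro ⟨hc, -⟩
        have := (hc 0).2
        simp at this
        omega

end Deriv

end LegendreAux

open LegendreAux

/-- Paper eq. (0Lprf4): the mixed recursion expressing the `l`-th derivative of the
zero-dimensional Legendre transform `γ` through the derivatives of `ω` and of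
`h = deriv γ`. The inner sum ranges over all ordered `j`-tuples `(k₁, …, k_j)` of
integers with `1 ≤ kᵢ ≤ l - 2` and `k₁ + ⋯ + k_j = l`. -/
theorem legendre_mixed_recursion
    (ω h : ℝ → ℝ) (hω : ContDiff ℝ (⊤ : ℕ∞) ω) (hh : ContDiff ℝ (⊤ : ℕ∞) h)
    (hinv₁ : ∀ φ : ℝ, deriv ω (h φ) = φ)
    (hinv₂ : ∀ x : ℝ, h (deriv ω x) = x)
    (γ : ℝ → ℝ) (hγ : ∀ φ : ℝ, γ φ = φ * h φ - ω (h φ))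
    (l : ℕ) (hl : 3 ≤ l) (φ : ℝ) :
    iteratedDeriv l γ φ =
      -∑ j ∈ Finset.Icc 2 l,
        iteratedDeriv j ω (h φ) * ((l.factorial : ℝ) / (j.factorial : ℝ)) *
          ∑ k ∈ (Fintype.piFinset fun _ : Fin j => Finset.Icc 1 (l - 2)) |>.filter
              (fun k => ∑ i, k i = l),
            ∏ i, iteratedDeriv (k i) h φ / ((k i).factorial : ℝ) := by
  classical
  have hl1 : 1 ≤ l := by omega
  have hγf : γ = fun x => x * h x - (ω ∘ h) x := funext fun x => hγ x
  have hωh : ContDiff ℝ (⊤ : ℕ∞) (ω ∘ h) := hω.comp hh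
  have hmul : ContDiff ℝ (⊤ : ℕ∞) (fun x : ℝ => x * h x) := contDiff_id.mul hh
  -- rewrite the inner sums of the goal as `S`
  have hSsmall : ∀ j : ℕ,
      (∑ k ∈ (Fintype.piFinset fun _ : Fin j => Finset.Icc 1 (l - 2)) |>.filter
          (fun k => ∑ i, k i = l),
        ∏ i, iteratedDeriv (k i) h φ / ((k i).factorial : ℝ)) = S h j l (l - 2) φ :=
    fun j => rfl
  simp only [hSsmall]
  -- split γ
  have hsplit : iteratedDeriv l γ φ
      = iteratedDeriv l (fun x : ℝ => x * h x) φ - iteratedDeriv l (ω ∘ h) φ := by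
    rw [hγf]; exact iteratedDeriv_sub' hmul hωh l φ
  -- the product part
  have hmulval : iteratedDeriv l (fun x : ℝ => x * h x) φ
      = φ * iteratedDeriv l h φ + (l : ℝ) * iteratedDeriv (l - 1) h φ := by
    have h0 := idmul hh (l - 1) φ
    have e1 : l - 1 + 1 = l := by omega
    rw [e1] at h0
    have e2 : ((l - 1 : ℕ) : ℝ) + 1 = (l : ℝ) := by
      push_cast [Nat.cast_sub hl1]; ring
    rw [e2] at h0
    exact h0
  -- Faà di Bruno for ω ∘ h
  have hfaa := faa (g := h) ω hω hh l hl1 φ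
  have hIcc : Finset.Icc 1 l = insert 1 (Finset.Icc 2 l) := by
    ext x; simp [Finset.mem_Icc, Finset.mem_insert]; omega
  have h1notin : (1 : ℕ) ∉ Finset.Icc 2 l := by simp
  rw [hIcc, Finset.sum_insert h1notin] at hfaa
  have hlne : (l.factorial : ℝ) ≠ 0 := Nat.cast_ne_zero.2 (Nat.factorial_ne_zero _)
  have hj1 : iteratedDeriv 1 ω (h φ) * ((l.factorial : ℝ) / ((1 : ℕ).factorial : ℝ))
        * S h 1 l l φ = φ * iteratedDeriv l h φ := by
    rw [iteratedDeriv_one, hinv₁ φ]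
    have hS1 : S h 1 l l φ = iteratedDeriv l h φ / (l.factorial : ℝ) := by
      rw [S, T_one hl1, Finset.sum_singleton]
      simp [G]
    rw [hS1]
    field_simp
    ring
  rw [hj1] at hfaa
  -- the second derivative identity
  have hω2 : iteratedDeriv 2 ω (h φ) * deriv h φ = 1 := by
    have hda : HasDerivAt (fun ψ : ℝ => deriv ω (h ψ))
        (iteratedDeriv 2 ω (h φ) * deriv h φ) φ := by
      have h1 : HasDerivAt (deriv ω) (iteratedDeriv 2 ω (h φ)) (h φ) := by
        have := hasDerivAt_iter hω 1 (h φ)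
        rwa [iteratedDeriv_one] at this
      have := h1.comp φ ((hh.differentiable (by simp) φ).hasDerivAt)
      exact this
    have hfn : (fun ψ : ℝ => deriv ω (h ψ)) = fun ψ => ψ := funext hinv₁
    rw [hfn] at hda
    exact hda.unique (hasDerivAt_id φ)
  -- difference of the two sums
  have hdiffsum : ∑ j ∈ Finset.Icc 2 l, iteratedDeriv j ω (h φ) *
        ((l.factorial : ℝ) / (j.factorial : ℝ)) * S h j l l φ
      - ∑ j ∈ Finset.Icc 2 l, iteratedDeriv j ω (h φ) *
        ((l.factorial : ℝ) / (j.factorial : ℝ)) * S h j l (l - 2) φ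
      = (l : ℝ) * iteratedDeriv (l - 1) h φ := by
    rw [← Finset.sum_sub_distrib]
    have hIcc2 : Finset.Icc 2 l = insert 2 (Finset.Icc 3 l) := by
      ext x; simp [Finset.mem_Icc, Finset.mem_insert]; omega
    have h2notin : (2 : ℕ) ∉ Finset.Icc 3 l := by simp
    rw [hIcc2, Finset.sum_insert h2notin]
    have hrest : ∑ j ∈ Finset.Icc 3 l,
        (iteratedDeriv j ω (h φ) * ((l.factorial : ℝ) / (j.factorial : ℝ)) * S h j l l φ
          - iteratedDeriv j ω (h φ) * ((l.factorial : ℝ) / (j.factorial : ℝ))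
            * S h j l (l - 2) φ) = 0 := by
      refine Finset.sum_eq_zero fun j hj => ?_
      have hj3 : 3 ≤ j := (Finset.mem_Icc.1 hj).1
      have hTeq : T j l l = T j l (l - 2) := T_eq (by omega) (by omega)
      rw [S, S, hTeq]
      ring
    rw [hrest, add_zero]
    -- j = 2 term
    have hsd : S h 2 l l φ - S h 2 l (l - 2) φ
        = G h 1 φ * G h (l - 1) φ + G h (l - 1) φ * G h 1 φ := by
      have hsub : ∑ k ∈ T 2 l l \ T 2 l (l - 2), ∏ i, G h (k i) φ
            + ∑ k ∈ T 2 l (l - 2), ∏ i, G h (k i) φ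
          = ∑ k ∈ T 2 l l, ∏ i, G h (k i) φ :=
        Finset.sum_sdiff T2_subset
      have hne : (![1, l - 1] : Fin 2 → ℕ) ≠ ![l - 1, 1] := by
        intro hc
        have := congrFun hc 0
        simp at this
        omega
      have hpair : ∑ k ∈ T 2 l l \ T 2 l (l - 2), ∏ i, G h (k i) φ
          = G h 1 φ * G h (l - 1) φ + G h (l - 1) φ * G h 1 φ := by
        rw [T2_sdiff hl, Finset.sum_pair hne]
        simp [Fin.prod_univ_two]
      rw [S, S, ← hsub, hpair]
      ring
    rw [← mul_sub, hsd]
    have hG1 : G h 1 φ = deriv h φ := by simp [G, iteratedDeriv_one]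
    have hGl : G h (l - 1) φ = iteratedDeriv (l - 1) h φ / (((l - 1).factorial : ℕ) : ℝ) := rfl
    have hfl : (l.factorial : ℝ) = (l : ℝ) * (((l - 1).factorial : ℕ) : ℝ) := by
      rw [← Nat.mul_factorial_pred (by omega : l ≠ 0)]
      push_cast
      ring
    have hlm : (((l - 1).factorial : ℕ) : ℝ) ≠ 0 := Nat.cast_ne_zero.2 (Nat.factorial_ne_zero _)
    have hstep : iteratedDeriv 2 ω (h φ) * ((l.factorial : ℝ) / ((2 : ℕ).factorial : ℝ))
          * (G h 1 φ * G h (l - 1) φ + G h (l - 1) φ * G h 1 φ)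
        = (iteratedDeriv 2 ω (h φ) * deriv h φ) * ((l : ℝ) * iteratedDeriv (l - 1) h φ) := by
      rw [hG1, hGl, hfl]
      have : ((2 : ℕ).factorial : ℝ) = 2 := by norm_num [Nat.factorial]
      rw [this]
      field_simp
      ring
    rw [hstep, hω2, one_mul]
  -- put everything together
  rw [hsplit, hmulval, hfaa]
  linarith [hdiffsum]
end

section
/- For every integer n ≥ 1 and every real φ, the explicit inverse-derivative formula (paper eqs. (0lege2)–(0lege3), in the form derived from (0lege4)) holds: iteratedDeriv n h φ = ∑_{k} (−1)^(∑_j k_j) · (∑_j j·k_j)! · (ω_2 (h φ))^(−(1 + ∑_j j·k_j)) · ∏_j (ω_{j+1} (h φ))^(k_j) / ((j!)^(k_j) · k_j!), where the sum ranges over all finitely supported functions k : ℕ → ℕ supported on {2, 3, 4, …} satisfying ∑_j (j − 1)·k_j = n − 1. (The cases n = 1, 2, 3 reproduce γ_2 = ω_2⁻¹, γ_3 = −ω_3 ω_2⁻³, γ_4 = −ω_4 ω_2⁻⁴ + 3 ω_3² ω_2⁻⁵.) -/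
open Finset

namespace InvFormula

/-- The condition on multi-indices. -/
def Cond (n : ℕ) (k : ℕ →₀ ℕ) : Prop :=
  (∀ j ∈ k.support, 2 ≤ j) ∧ ∑ j ∈ k.support, (j - 1) * k j = n - 1

lemma support_bound {n : ℕ} {k : ℕ →₀ ℕ} (hk : Cond n k) :
    k.support ⊆ Finset.range (n + 1) ∧ ∀ j, k j ≤ n := by
  obtain ⟨h2, hsum⟩ := hk
  have key : ∀ j ∈ k.support, (j - 1) * k j ≤ n - 1 := by
    intro j hj
    rw [← hsum]
    exact Finset.single_le_sum (f := fun i => (i - 1) * k i) (fun i _ => Nat.zero_le _) hj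
  constructor
  · intro j hj
    have h1 := h2 j hj
    have h3 := key j hj
    have h4 : 1 ≤ k j := Nat.one_le_iff_ne_zero.mpr (Finsupp.mem_support_iff.mp hj)
    have : j - 1 ≤ n - 1 := le_trans (Nat.le_mul_of_pos_right _ h4) h3
    simp only [Finset.mem_range]
    omega
  · intro j
    by_cases hj : j ∈ k.support
    · have h1 := h2 j hj
      have h3 := key j hj
      have : k j ≤ (j - 1) * k j := Nat.le_mul_of_pos_left _ (by omega)
      omega
    · rw [Finsupp.notMem_support_iff.mp hj]; exact Nat.zero_le _

lemma cond_finite (n : ℕ) : {k : ℕ →₀ ℕ | Cond n k}.Finite := by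
  classical
  have : {k : ℕ →₀ ℕ | Cond n k} ⊆
      ↑(Finset.Iic (Finsupp.indicator (range (n+1)) (fun _ _ => n))) := by
    intro k hk
    simp only [Finset.coe_Iic, Set.mem_Iic]
    intro j
    obtain ⟨hs, hb⟩ := support_bound hk
    rw [Finsupp.indicator_apply]
    split_ifs with hj
    · exact hb j
    · have : k j = 0 := by
        by_contra hne
        exact hj (hs (Finsupp.mem_support_iff.mpr hne))
      simp [this]
  exact Set.Finite.subset (Finset.finite_toSet _) this

noncomputable def TT (n : ℕ) : Finset (ℕ →₀ ℕ) := (cond_finite n).toFinset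

lemma mem_TT {n : ℕ} {k : ℕ →₀ ℕ} : k ∈ TT n ↔ Cond n k := (cond_finite n).mem_toFinset

lemma sum_supp_eq_range {M : Type*} [AddCommMonoid M] (k : ℕ →₀ ℕ) {N : ℕ}
    (hs : k.support ⊆ range N) (F : ℕ → ℕ → M) (hF : ∀ j, F j 0 = 0) :
    ∑ j ∈ k.support, F j (k j) = ∑ j ∈ range N, F j (k j) :=
  Finset.sum_subset hs (fun j _ hj => by rw [Finsupp.notMem_support_iff.mp hj, hF])

lemma prod_supp_eq_range {M : Type*} [CommMonoid M] (k : ℕ →₀ ℕ) {N : ℕ}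
    (hs : k.support ⊆ range N) (F : ℕ → ℕ → M) (hF : ∀ j, F j 0 = 1) :
    ∏ j ∈ k.support, F j (k j) = ∏ j ∈ range N, F j (k j) :=
  Finset.prod_subset hs (fun j _ hj => by rw [Finsupp.notMem_support_iff.mp hj, hF])


variable (ω h : ℝ → ℝ)

noncomputable def g (m : ℕ) (φ : ℝ) : ℝ := iteratedDeriv m ω (h φ)

section Analysis
variable (hω : ContDiff ℝ (⊤ : ℕ∞) ω) (hh : ContDiff ℝ (⊤ : ℕ∞) h)
  (hinv₁ : ∀ φ : ℝ, deriv ω (h φ) = φ)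
  (hω₂ : ∀ φ : ℝ, iteratedDeriv 2 ω (h φ) ≠ 0)

include hω hh hinv₁ hω₂

lemma hasDerivAt_h (φ : ℝ) : HasDerivAt h ((g ω h 2 φ)⁻¹) φ := by
  have dh : HasDerivAt h (deriv h φ) φ :=
    (hh.differentiable (by simp) φ).hasDerivAt
  have hω' : ContDiff ℝ ((⊤:ℕ∞) : WithTop ℕ∞) (deriv ω) := by
    have h0 : ContDiff ℝ ((⊤:ℕ∞) : WithTop ℕ∞) ω := hω.of_le (by simp)
    have := ContDiff.iterate_deriv 1 h0
    simpa using this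
  have dω2 : HasDerivAt (deriv ω) (g ω h 2 φ) (h φ) := by
    have := (hω'.differentiable (by simp) (h φ)).hasDerivAt
    have h2 : deriv (deriv ω) (h φ) = g ω h 2 φ := by
      simp [g, iteratedDeriv_succ, iteratedDeriv_one]
    rwa [h2] at this
  have dcomp : HasDerivAt (deriv ω ∘ h) (g ω h 2 φ * deriv h φ) φ := dω2.comp φ dh
  have did : HasDerivAt (deriv ω ∘ h) 1 φ := by
    have : (deriv ω ∘ h) = id := funext fun φ => hinv₁ φ
    rw [this]; exact hasDerivAt_id φ
  have huniq : g ω h 2 φ * deriv h φ = 1 := dcomp.unique did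
  have : deriv h φ = (g ω h 2 φ)⁻¹ := by
    have hne := hω₂ φ
    have hne' : g ω h 2 φ ≠ 0 := hne
    field_simp
    linear_combination huniq
  rwa [this] at dh

lemma hasDerivAt_g (m : ℕ) (φ : ℝ) :
    HasDerivAt (g ω h m) (g ω h (m + 1) φ * (g ω h 2 φ)⁻¹) φ := by
  have hsm : ContDiff ℝ ((⊤:ℕ∞) : WithTop ℕ∞) (iteratedDeriv m ω) := by
    have h0 : ContDiff ℝ ((⊤:ℕ∞) : WithTop ℕ∞) ω := hω.of_le (by simp)
    have := ContDiff.iterate_deriv m h0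
    rwa [← iteratedDeriv_eq_iterate] at this
  have d1 : HasDerivAt (iteratedDeriv m ω) (g ω h (m + 1) φ) (h φ) := by
    have := (hsm.differentiable (by simp) (h φ)).hasDerivAt
    have h2 : deriv (iteratedDeriv m ω) (h φ) = g ω h (m+1) φ := by
      simp [g, iteratedDeriv_succ]
    rwa [h2] at this
  exact d1.comp φ (hasDerivAt_h ω h hω hh hinv₁ hω₂ φ)

end Analysis

def Mk (N : ℕ) (k : ℕ →₀ ℕ) : ℕ := ∑ j ∈ range N, j * k j
def Ek (N : ℕ) (k : ℕ →₀ ℕ) : ℕ := ∑ j ∈ range N, k j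

noncomputable def uu (j m : ℕ) (φ : ℝ) : ℝ :=
  g ω h (j+1) φ ^ m / ((j.factorial : ℝ) ^ m * (m.factorial : ℝ))

noncomputable def Pp (N : ℕ) (k : ℕ →₀ ℕ) (φ : ℝ) : ℝ :=
  ∏ j ∈ range N, uu ω h j (k j) φ

noncomputable def trm (N : ℕ) (k : ℕ →₀ ℕ) (φ : ℝ) : ℝ :=
  (-1:ℝ) ^ Ek N k * ((Mk N k).factorial : ℝ) * g ω h 2 φ ^ (-(1 + (Mk N k : ℤ))) * Pp ω h N k φ

noncomputable def uD (j m : ℕ) (φ : ℝ) : ℝ :=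
  (m : ℝ) * g ω h (j+1) φ ^ (m - 1) * (g ω h (j+2) φ * (g ω h 2 φ)⁻¹) /
    ((j.factorial : ℝ) ^ m * (m.factorial : ℝ))

noncomputable def Sp (N : ℕ) (k : ℕ →₀ ℕ) (j : ℕ) (φ : ℝ) : ℝ :=
  (-1:ℝ) ^ Ek N k * ((Mk N k).factorial : ℝ) * g ω h 2 φ ^ (-(1 + (Mk N k : ℤ))) *
    ((∏ i ∈ (range N).erase j, uu ω h i (k i) φ) * uD ω h j (k j) φ)

noncomputable def Bp (N : ℕ) (k : ℕ →₀ ℕ) (φ : ℝ) : ℝ :=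
  (-1:ℝ) ^ Ek N k * ((Mk N k).factorial : ℝ) *
    (((-(1 + (Mk N k : ℤ)) : ℤ) : ℝ) * g ω h 2 φ ^ (-(1 + (Mk N k : ℤ)) - 1) *
      (g ω h 3 φ * (g ω h 2 φ)⁻¹)) * Pp ω h N k φ

section Analysis2
variable (hω : ContDiff ℝ (⊤ : ℕ∞) ω) (hh : ContDiff ℝ (⊤ : ℕ∞) h)
  (hinv₁ : ∀ φ : ℝ, deriv ω (h φ) = φ)
  (hω₂ : ∀ φ : ℝ, iteratedDeriv 2 ω (h φ) ≠ 0)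

include hω hh hinv₁ hω₂

lemma hasDerivAt_uu (j m : ℕ) (φ : ℝ) :
    HasDerivAt (fun φ => uu ω h j m φ) (uD ω h j m φ) φ := by
  have := ((hasDerivAt_g ω h hω hh hinv₁ hω₂ (j+1) φ).pow m).div_const
    ((j.factorial : ℝ) ^ m * (m.factorial : ℝ))
  simpa [uu, uD, mul_assoc] using this

lemma hasDerivAt_trm (N : ℕ) (k : ℕ →₀ ℕ) (φ : ℝ) :
    HasDerivAt (trm ω h N k) (Bp ω h N k φ + ∑ j ∈ range N, Sp ω h N k j φ) φ := by
  classical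
  have hzdef : ∀ z : ℤ, z = -(1 + (Mk N k : ℤ)) → True := fun _ _ => trivial
  have hF : HasDerivAt (fun φ => g ω h 2 φ ^ (-(1 + (Mk N k : ℤ))))
      (((-(1 + (Mk N k : ℤ)) : ℤ) : ℝ) * g ω h 2 φ ^ ((-(1 + (Mk N k : ℤ))) - 1) * (g ω h 3 φ * (g ω h 2 φ)⁻¹)) φ := by
    have := (hasDerivAt_zpow (-(1 + (Mk N k : ℤ))) (g ω h 2 φ) (Or.inl (hω₂ φ))).comp φ
      (hasDerivAt_g ω h hω hh hinv₁ hω₂ 2 φ)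
    simpa [Function.comp_def, mul_assoc] using this
  have hG : HasDerivAt (Pp ω h N k)
      (∑ j ∈ range N, (∏ i ∈ (range N).erase j, uu ω h i (k i) φ) * uD ω h j (k j) φ) φ := by
    have := HasDerivAt.fun_finset_prod (u := range N) (f := fun j => uu ω h j (k j))
      (f' := fun j => uD ω h j (k j) φ) (x := φ)
      (fun i _ => hasDerivAt_uu ω h hω hh hinv₁ hω₂ i (k i) φ)
    simp only [smul_eq_mul] at this
    exact this
  have hFG := hF.fun_mul hG
  have := hFG.const_mul ((-1:ℝ) ^ Ek N k * ((Mk N k).factorial : ℝ))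
  have heq : (trm ω h N k) = fun φ => (-1:ℝ) ^ Ek N k * ((Mk N k).factorial : ℝ) *
      ((fun φ => g ω h 2 φ ^ (-(1 + (Mk N k : ℤ)))) φ * Pp ω h N k φ) := by
    funext ψ; simp only [trm]; ring
  rw [← heq] at this
  refine this.congr_deriv (Eq.symm ?_)
  simp only [Bp, Sp, Pp, Finset.mul_sum]
  rw [mul_add]
  congr 1
  · ring
  · rw [Finset.mul_sum]
    exact Finset.sum_congr rfl fun j _ => by ring

end Analysis2

-- ### combinatorial helpers

lemma sum_extract {M : Type*} [AddCommMonoid M] {s : Finset ℕ} {a : ℕ} (ha : a ∈ s) (F : ℕ → M) :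
    ∑ i ∈ s, F i = F a + ∑ i ∈ s.erase a, F i := (Finset.add_sum_erase s F ha).symm

lemma prod_extract {M : Type*} [CommMonoid M] {s : Finset ℕ} {a : ℕ} (ha : a ∈ s) (F : ℕ → M) :
    ∏ i ∈ s, F i = F a * ∏ i ∈ s.erase a, F i := (Finset.mul_prod_erase s F ha).symm

noncomputable def bump (k : ℕ →₀ ℕ) : ℕ →₀ ℕ := k + Finsupp.single 2 1

noncomputable def shift (k : ℕ →₀ ℕ) (j : ℕ) : ℕ →₀ ℕ := k - Finsupp.single j 1 + Finsupp.single (j+1) 1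

lemma bump_apply (k : ℕ →₀ ℕ) (i : ℕ) :
    bump k i = if i = 2 then k i + 1 else k i := by
  rcases eq_or_ne i 2 with rfl | hne
  · simp [bump]
  · simp [bump, Finsupp.single_apply, Ne.symm hne, hne]

lemma shift_apply (k : ℕ →₀ ℕ) (j i : ℕ) :
    shift k j i =
      if i = j then k j - 1 else if i = j + 1 then k (j+1) + 1 else k i := by
  rcases eq_or_ne i j with rfl | hne
  · simp [shift, Finsupp.single_apply, Nat.succ_ne_self]
  · rcases eq_or_ne i (j+1) with rfl | hne2
    · simp [shift, Finsupp.single_apply, hne, Ne.symm hne]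
    · simp [shift, Finsupp.single_apply, hne, hne2, Ne.symm hne, Ne.symm hne2]

lemma sum_bump {M : Type*} [AddCommMonoid M] (k : ℕ →₀ ℕ) {N : ℕ} (h2 : 2 < N)
    (F : ℕ → ℕ → M) :
    ∑ i ∈ range N, F i (bump k i) =
      F 2 (k 2 + 1) + ∑ i ∈ (range N).erase 2, F i (k i) := by
  rw [sum_extract (Finset.mem_range.mpr h2) (fun i => F i (bump k i))]
  congr 1
  · rw [bump_apply]; simp
  · exact Finset.sum_congr rfl fun i hi => by
      rw [bump_apply]; simp [Finset.ne_of_mem_erase hi]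

lemma sum_base2 {M : Type*} [AddCommMonoid M] (k : ℕ →₀ ℕ) {N : ℕ} (h2 : 2 < N)
    (F : ℕ → ℕ → M) :
    ∑ i ∈ range N, F i (k i) = F 2 (k 2) + ∑ i ∈ (range N).erase 2, F i (k i) :=
  sum_extract (Finset.mem_range.mpr h2) _

lemma sum_shift {M : Type*} [AddCommMonoid M] (k : ℕ →₀ ℕ) {N j : ℕ} (hj : j < N)
    (hj1 : j + 1 < N) (F : ℕ → ℕ → M) :
    ∑ i ∈ range N, F i (shift k j i) =
      F j (k j - 1) + (F (j+1) (k (j+1) + 1) +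
        ∑ i ∈ ((range N).erase j).erase (j+1), F i (k i)) := by
  rw [sum_extract (Finset.mem_range.mpr hj)
    (fun i => F i (shift k j i))]
  congr 1
  · rw [shift_apply]; simp
  · rw [sum_extract (Finset.mem_erase.mpr ⟨by omega, Finset.mem_range.mpr hj1⟩)
      (fun i => F i (shift k j i))]
    congr 1
    · rw [shift_apply]; simp [Nat.succ_ne_self]
    · refine Finset.sum_congr rfl fun i hi => ?_
      have h1 : i ≠ j + 1 := Finset.ne_of_mem_erase hi
      have h2 : i ≠ j := Finset.ne_of_mem_erase (Finset.mem_of_mem_erase hi)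
      rw [shift_apply]; simp [h1, h2]

lemma sum_base_shift {M : Type*} [AddCommMonoid M] (k : ℕ →₀ ℕ) {N j : ℕ} (hj : j < N)
    (hj1 : j + 1 < N) (F : ℕ → ℕ → M) :
    ∑ i ∈ range N, F i (k i) = F j (k j) + (F (j+1) (k (j+1)) +
        ∑ i ∈ ((range N).erase j).erase (j+1), F i (k i)) := by
  rw [sum_extract (Finset.mem_range.mpr hj) (fun i => F i (k i))]
  congr 1
  exact sum_extract (Finset.mem_erase.mpr ⟨by omega, Finset.mem_range.mpr hj1⟩) _

lemma prod_bump {M : Type*} [CommMonoid M] (k : ℕ →₀ ℕ) {N : ℕ} (h2 : 2 < N)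
    (F : ℕ → ℕ → M) :
    ∏ i ∈ range N, F i (bump k i) = F 2 (k 2 + 1) * ∏ i ∈ (range N).erase 2, F i (k i) := by
  rw [prod_extract (Finset.mem_range.mpr h2) (fun i => F i (bump k i))]
  congr 1
  · rw [bump_apply]; simp
  · exact Finset.prod_congr rfl fun i hi => by
      rw [bump_apply]; simp [Finset.ne_of_mem_erase hi]

lemma prod_base2 {M : Type*} [CommMonoid M] (k : ℕ →₀ ℕ) {N : ℕ} (h2 : 2 < N)
    (F : ℕ → ℕ → M) :
    ∏ i ∈ range N, F i (k i) = F 2 (k 2) * ∏ i ∈ (range N).erase 2, F i (k i) :=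
  prod_extract (Finset.mem_range.mpr h2) _

lemma prod_shift {M : Type*} [CommMonoid M] (k : ℕ →₀ ℕ) {N j : ℕ} (hj : j < N)
    (hj1 : j + 1 < N) (F : ℕ → ℕ → M) :
    ∏ i ∈ range N, F i (shift k j i) =
      F j (k j - 1) * (F (j+1) (k (j+1) + 1) *
        ∏ i ∈ ((range N).erase j).erase (j+1), F i (k i)) := by
  rw [prod_extract (Finset.mem_range.mpr hj) (fun i => F i (shift k j i))]
  congr 1
  · rw [shift_apply]; simp
  · rw [prod_extract (Finset.mem_erase.mpr ⟨by omega, Finset.mem_range.mpr hj1⟩)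
      (fun i => F i (shift k j i))]
    congr 1
    · rw [shift_apply]; simp [Nat.succ_ne_self]
    · refine Finset.prod_congr rfl fun i hi => ?_
      have h1 : i ≠ j + 1 := Finset.ne_of_mem_erase hi
      have h2 : i ≠ j := Finset.ne_of_mem_erase (Finset.mem_of_mem_erase hi)
      rw [shift_apply]; simp [h1, h2]

lemma prod_base_shift {M : Type*} [CommMonoid M] (k : ℕ →₀ ℕ) {N j : ℕ} (hj : j < N)
    (hj1 : j + 1 < N) (F : ℕ → ℕ → M) :
    ∏ i ∈ range N, F i (k i) = F j (k j) * (F (j+1) (k (j+1)) *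
        ∏ i ∈ ((range N).erase j).erase (j+1), F i (k i)) := by
  rw [prod_extract (Finset.mem_range.mpr hj) (fun i => F i (k i))]
  congr 1
  exact prod_extract (Finset.mem_erase.mpr ⟨by omega, Finset.mem_range.mpr hj1⟩) _

-- transfer of the Cond sum to range sums
lemma cond_sum_range {n N : ℕ} {k : ℕ →₀ ℕ} (hk : Cond n k) (hN : n + 1 ≤ N) :
    ∑ i ∈ range N, (i - 1) * k i = n - 1 := by
  have hs : k.support ⊆ range N :=
    (support_bound hk).1.trans (Finset.range_subset_range.mpr hN)
  rw [← Finset.sum_subset hs (fun j _ hj => by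
    rw [Finsupp.notMem_support_iff.mp hj, mul_zero])]
  exact hk.2

lemma cond_of_range {n N : ℕ} {k : ℕ →₀ ℕ} (h2 : ∀ j ∈ k.support, 2 ≤ j)
    (hs : k.support ⊆ range N) (hsum : ∑ i ∈ range N, (i - 1) * k i = n - 1) :
    Cond n k := by
  refine ⟨h2, ?_⟩
  rw [Finset.sum_subset hs (fun j _ hj => by
    rw [Finsupp.notMem_support_iff.mp hj, mul_zero])]
  exact hsum

noncomputable def unbump (k : ℕ →₀ ℕ) : ℕ →₀ ℕ := k - Finsupp.single 2 1

noncomputable def unshift (k : ℕ →₀ ℕ) (i : ℕ) : ℕ →₀ ℕ :=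
  k - Finsupp.single i 1 + Finsupp.single (i-1) 1

lemma unbump_apply (k : ℕ →₀ ℕ) (i : ℕ) :
    unbump k i = if i = 2 then k 2 - 1 else k i := by
  rcases eq_or_ne i 2 with rfl | hne
  · simp [unbump]
  · simp [unbump, Finsupp.single_apply, hne, Ne.symm hne]

lemma unbump_bump (k : ℕ →₀ ℕ) : unbump (bump k) = k := by
  ext i
  rw [unbump_apply]
  rcases eq_or_ne i 2 with rfl | hne
  · rw [if_pos rfl, bump_apply]; simp
  · rw [if_neg hne, bump_apply, if_neg hne]

lemma bump_unbump {k : ℕ →₀ ℕ} (h1 : 1 ≤ k 2) : bump (unbump k) = k := by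
  ext i
  rw [bump_apply]
  rcases eq_or_ne i 2 with rfl | hne
  · rw [if_pos rfl, unbump_apply, if_pos rfl]; omega
  · rw [if_neg hne, unbump_apply, if_neg hne]

lemma unshift_apply (k : ℕ →₀ ℕ) {i : ℕ} (hi : 1 ≤ i) (a : ℕ) :
    unshift k i a = if a = i then k i - 1 else if a = i - 1 then k (i-1) + 1 else k a := by
  rcases eq_or_ne a i with rfl | hne
  · simp [unshift, Finsupp.single_apply]
    omega
  · rcases eq_or_ne a (i-1) with rfl | hne2
    · simp [unshift, Finsupp.single_apply, hne, Ne.symm hne]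
    · simp [unshift, Finsupp.single_apply, hne, hne2, Ne.symm hne, Ne.symm hne2]

lemma unshift_shift {k : ℕ →₀ ℕ} {j : ℕ} (h1 : 1 ≤ k j) :
    unshift (shift k j) (j+1) = k := by
  ext a
  rw [unshift_apply _ (by omega)]
  have e1 : j + 1 - 1 = j := by omega
  rcases eq_or_ne a (j+1) with rfl | hne
  · rw [if_pos rfl, shift_apply, if_neg (by omega), if_pos rfl]; omega
  · rw [if_neg hne]
    rcases eq_or_ne a j with rfl | hne2
    · have hv : (shift k a) a = k a - 1 := by rw [shift_apply, if_pos rfl]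
      simp only [e1, if_pos rfl, hv, if_true]
      omega
    · rw [if_neg (by omega), shift_apply, if_neg hne2, if_neg hne]

lemma shift_unshift {k : ℕ →₀ ℕ} {i : ℕ} (hi : 3 ≤ i) (h1 : 1 ≤ k i) :
    shift (unshift k i) (i-1) = k := by
  ext a
  have e1 : i - 1 + 1 = i := by omega
  rw [shift_apply, e1]
  rcases eq_or_ne a (i-1) with rfl | hne
  · rw [if_pos rfl, unshift_apply _ (by omega), if_neg (by omega), if_pos rfl]; omega
  · rw [if_neg hne]
    rcases eq_or_ne a i with rfl | hne2
    · rw [if_pos rfl, unshift_apply _ (by omega), if_pos rfl]; omega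
    · rw [if_neg hne2, unshift_apply _ (by omega), if_neg hne2, if_neg hne]

lemma supp_bump_subset {k : ℕ →₀ ℕ} {N : ℕ} (hs : k.support ⊆ range N) (h2 : 2 < N) :
    (bump k).support ⊆ range N := by
  intro i hi
  rw [Finsupp.mem_support_iff, bump_apply] at hi
  by_cases h : i = 2
  · subst h; exact Finset.mem_range.mpr h2
  · rw [if_neg h] at hi
    exact hs (Finsupp.mem_support_iff.mpr hi)

lemma supp_shift_subset {k : ℕ →₀ ℕ} {N j : ℕ} (hs : k.support ⊆ range N)
    (hj1 : j + 1 < N) : (shift k j).support ⊆ range N := by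
  intro i hi
  rw [Finsupp.mem_support_iff, shift_apply] at hi
  by_cases h : i = j
  · subst h; exact Finset.mem_range.mpr (by omega)
  · rw [if_neg h] at hi
    by_cases h' : i = j + 1
    · subst h'; exact Finset.mem_range.mpr hj1
    · rw [if_neg h'] at hi
      exact hs (Finsupp.mem_support_iff.mpr hi)

lemma cond_bump {n : ℕ} {k : ℕ →₀ ℕ} (hn : 1 ≤ n) (hk : Cond n k) :
    Cond (n+1) (bump k) := by
  have hs : k.support ⊆ range (n+3) :=
    (support_bound hk).1.trans (Finset.range_subset_range.mpr (by omega))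
  have hbase := cond_sum_range hk (N := n+3) (by omega)
  refine cond_of_range ?_ (supp_bump_subset hs (by omega)) ?_
  · intro i hi
    rw [Finsupp.mem_support_iff, bump_apply] at hi
    by_cases h : i = 2
    · omega
    · rw [if_neg h] at hi
      exact hk.1 i (Finsupp.mem_support_iff.mpr hi)
  · rw [sum_bump k (by omega : 2 < n+3) (fun i m => (i-1) * m)]
    rw [sum_base2 k (by omega : 2 < n+3) (fun i m => (i-1) * m)] at hbase
    omega

lemma cond_unbump {n : ℕ} {k : ℕ →₀ ℕ} (hn : 1 ≤ n) (hk : Cond (n+1) k) (h1 : 1 ≤ k 2) :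
    Cond n (unbump k) := by
  have hs : k.support ⊆ range (n+3) :=
    (support_bound hk).1.trans (Finset.range_subset_range.mpr (by omega))
  have hbase := cond_sum_range hk (N := n+3) (by omega)
  have hsu : (unbump k).support ⊆ range (n+3) := by
    intro i hi
    rw [Finsupp.mem_support_iff, unbump_apply] at hi
    by_cases h : i = 2
    · subst h; exact Finset.mem_range.mpr (by omega)
    · rw [if_neg h] at hi
      exact hs (Finsupp.mem_support_iff.mpr hi)
  refine cond_of_range ?_ hsu ?_
  · intro i hi
    rw [Finsupp.mem_support_iff, unbump_apply] at hi
    by_cases h : i = 2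
    · omega
    · rw [if_neg h] at hi
      exact hk.1 i (Finsupp.mem_support_iff.mpr hi)
  · have hrw : ∀ i ∈ range (n+3), (i-1) * unbump k i =
        (fun i m => (i-1) * m) i (unbump k i) := fun _ _ => rfl
    rw [sum_base2 (unbump k) (by omega : 2 < n+3) (fun i m => (i-1) * m)]
    rw [sum_base2 k (by omega : 2 < n+3) (fun i m => (i-1) * m)] at hbase
    have e2 : ∑ i ∈ (range (n+3)).erase 2, (i-1) * unbump k i =
        ∑ i ∈ (range (n+3)).erase 2, (i-1) * k i := by
      refine Finset.sum_congr rfl fun i hi => ?_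
      rw [unbump_apply, if_neg (Finset.ne_of_mem_erase hi)]
    rw [e2, unbump_apply, if_pos rfl]
    omega

lemma cond_shift {n : ℕ} {k : ℕ →₀ ℕ} {j : ℕ} (hn : 1 ≤ n) (hk : Cond n k)
    (hj : j ∈ k.support) : Cond (n+1) (shift k j) := by
  have h2j : 2 ≤ j := hk.1 j hj
  have h1 : 1 ≤ k j := Nat.one_le_iff_ne_zero.mpr (Finsupp.mem_support_iff.mp hj)
  have hjn : j < n + 1 := Finset.mem_range.mp ((support_bound hk).1 hj)
  have hs : k.support ⊆ range (n+3) :=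
    (support_bound hk).1.trans (Finset.range_subset_range.mpr (by omega))
  have hbase := cond_sum_range hk (N := n+3) (by omega)
  refine cond_of_range ?_ (supp_shift_subset hs (by omega)) ?_
  · intro i hi
    rw [Finsupp.mem_support_iff, shift_apply] at hi
    by_cases h : i = j
    · omega
    · rw [if_neg h] at hi
      by_cases h' : i = j + 1
      · omega
      · rw [if_neg h'] at hi
        exact hk.1 i (Finsupp.mem_support_iff.mpr hi)
  · rw [sum_shift k (by omega : j < n+3) (by omega : j+1 < n+3) (fun i m => (i-1) * m)]
    rw [sum_base_shift k (by omega : j < n+3) (by omega : j+1 < n+3)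
      (fun i m => (i-1) * m)] at hbase
    have p1 : (j-1) * (k j - 1) = (j-1) * k j - (j-1) := Nat.mul_sub_one _ _
    have p2 : (j+1-1) * (k (j+1) + 1) = (j+1-1) * k (j+1) + (j+1-1) := by ring
    have p3 : (j-1) ≤ (j-1) * k j := Nat.le_mul_of_pos_right _ (by omega)
    simp only [Nat.add_sub_cancel] at hbase p2 ⊢
    omega

lemma sum_unshift {M : Type*} [AddCommMonoid M] (k : ℕ →₀ ℕ) {N j : ℕ} (hj : j < N)
    (hj1 : j + 1 < N) (F : ℕ → ℕ → M) :
    ∑ i ∈ range N, F i (unshift k (j+1) i) =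
      F (j+1) (k (j+1) - 1) + (F j (k j + 1) +
        ∑ i ∈ ((range N).erase (j+1)).erase j, F i (k i)) := by
  have e1 : j + 1 - 1 = j := by omega
  rw [sum_extract (Finset.mem_range.mpr hj1) (fun i => F i (unshift k (j+1) i))]
  congr 1
  · rw [unshift_apply _ (by omega), if_pos rfl]
  · rw [sum_extract (Finset.mem_erase.mpr ⟨by omega, Finset.mem_range.mpr hj⟩)
      (fun i => F i (unshift k (j+1) i))]
    congr 1
    · rw [unshift_apply _ (by omega), if_neg (by omega), e1, if_pos rfl]
    · refine Finset.sum_congr rfl fun i hi => ?_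
      have h1 : i ≠ j := Finset.ne_of_mem_erase hi
      have h2 : i ≠ j + 1 := Finset.ne_of_mem_erase (Finset.mem_of_mem_erase hi)
      rw [unshift_apply _ (by omega), if_neg h2, e1, if_neg h1]

lemma sum_base_unshift {M : Type*} [AddCommMonoid M] (k : ℕ →₀ ℕ) {N j : ℕ} (hj : j < N)
    (hj1 : j + 1 < N) (F : ℕ → ℕ → M) :
    ∑ i ∈ range N, F i (k i) = F (j+1) (k (j+1)) + (F j (k j) +
        ∑ i ∈ ((range N).erase (j+1)).erase j, F i (k i)) := by
  rw [sum_extract (Finset.mem_range.mpr hj1) (fun i => F i (k i))]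
  congr 1
  exact sum_extract (Finset.mem_erase.mpr ⟨by omega, Finset.mem_range.mpr hj⟩) _

lemma cond_unshift {n : ℕ} {k : ℕ →₀ ℕ} {i : ℕ} (hn : 1 ≤ n) (hk : Cond (n+1) k)
    (hi3 : 3 ≤ i) (h1 : 1 ≤ k i) : Cond n (unshift k i) := by
  have hin : i < n + 2 := Finset.mem_range.mp ((support_bound hk).1
    (Finsupp.mem_support_iff.mpr (by omega)))
  have hs : k.support ⊆ range (n+3) :=
    (support_bound hk).1.trans (Finset.range_subset_range.mpr (by omega))
  have hbase := cond_sum_range hk (N := n+3) (by omega)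
  obtain ⟨j, rfl⟩ : ∃ j, i = j + 1 := ⟨i - 1, by omega⟩
  have e1 : j + 1 - 1 = j := by omega
  have hsu : (unshift k (j+1)).support ⊆ range (n+3) := by
    intro a ha
    rw [Finsupp.mem_support_iff, unshift_apply _ (by omega), e1] at ha
    by_cases h : a = j + 1
    · subst h; exact Finset.mem_range.mpr (by omega)
    · rw [if_neg h] at ha
      by_cases h' : a = j
      · subst h'; exact Finset.mem_range.mpr (by omega)
      · rw [if_neg h'] at ha
        exact hs (Finsupp.mem_support_iff.mpr ha)
  refine cond_of_range ?_ hsu ?_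
  · intro a ha
    rw [Finsupp.mem_support_iff, unshift_apply _ (by omega), e1] at ha
    by_cases h : a = j + 1
    · omega
    · rw [if_neg h] at ha
      by_cases h' : a = j
      · omega
      · rw [if_neg h'] at ha
        exact hk.1 a (Finsupp.mem_support_iff.mpr ha)
  · rw [sum_unshift k (by omega : j < n+3) (by omega : j+1 < n+3) (fun i m => (i-1) * m)]
    rw [sum_base_unshift k (by omega : j < n+3) (by omega : j+1 < n+3)
      (fun i m => (i-1) * m)] at hbase
    have p1 : (j+1-1) * (k (j+1) - 1) = (j+1-1) * k (j+1) - (j+1-1) := Nat.mul_sub_one _ _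
    have p2 : (j-1) * (k j + 1) = (j-1) * k j + (j-1) := by ring
    have p3 : (j+1-1) ≤ (j+1-1) * k (j+1) := Nat.le_mul_of_pos_right _ (by omega)
    simp only [Nat.add_sub_cancel] at hbase p1 p3 ⊢
    omega


noncomputable def W (N : ℕ) (k : ℕ →₀ ℕ) (i : ℕ) (φ : ℝ) : ℝ :=
  ((i * k i : ℕ) : ℝ) / ((Mk N k : ℕ) : ℝ) * trm ω h N k φ

lemma Ek_bump {k : ℕ →₀ ℕ} {N : ℕ} (h2 : 2 < N) : Ek N (bump k) = Ek N k + 1 := by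
  unfold Ek
  rw [sum_bump k h2 (fun _ m => m), sum_base2 k h2 (fun _ m => m)]
  omega

lemma Mk_bump {k : ℕ →₀ ℕ} {N : ℕ} (h2 : 2 < N) : Mk N (bump k) = Mk N k + 2 := by
  unfold Mk
  rw [sum_bump k h2 (fun i m => i * m), sum_base2 k h2 (fun i m => i * m)]
  omega

lemma Ek_shift {k : ℕ →₀ ℕ} {N j : ℕ} (hj1 : j + 1 < N) (h1 : 1 ≤ k j) :
    Ek N (shift k j) = Ek N k := by
  unfold Ek
  rw [sum_shift k (by omega) hj1 (fun _ m => m), sum_base_shift k (by omega) hj1 (fun _ m => m)]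
  omega

lemma Mk_shift {k : ℕ →₀ ℕ} {N j : ℕ} (hj1 : j + 1 < N) (h1 : 1 ≤ k j) :
    Mk N (shift k j) = Mk N k + 1 := by
  unfold Mk
  rw [sum_shift k (by omega) hj1 (fun i m => i * m),
    sum_base_shift k (by omega) hj1 (fun i m => i * m)]
  obtain ⟨m, hm⟩ : ∃ m, k j = m + 1 := ⟨k j - 1, by omega⟩
  rw [hm]
  simp only [Nat.add_sub_cancel]
  ring

lemma uu_succ (i m : ℕ) (φ : ℝ) :
    uu ω h i (m+1) φ = uu ω h i m φ * g ω h (i+1) φ / ((i.factorial : ℝ) * (m+1)) := by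
  have hfi : (i.factorial : ℝ) ≠ 0 := Nat.cast_ne_zero.mpr i.factorial_ne_zero
  have hfm : (m.factorial : ℝ) ≠ 0 := Nat.cast_ne_zero.mpr m.factorial_ne_zero
  have hm1 : ((m:ℝ) + 1) ≠ 0 := by positivity
  simp only [uu, pow_succ, Nat.factorial_succ]
  push_cast
  rw [div_mul_eq_mul_div, div_div]
  congr 1
  ring

lemma Pp_bump {k : ℕ →₀ ℕ} {N : ℕ} (h2 : 2 < N) (φ : ℝ) :
    Pp ω h N (bump k) φ = Pp ω h N k φ * g ω h 3 φ / (2 * ((k 2 : ℝ) + 1)) := by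
  unfold Pp
  rw [prod_bump k h2 (fun i m => uu ω h i m φ), prod_base2 k h2 (fun i m => uu ω h i m φ)]
  rw [uu_succ]
  have : (Nat.factorial 2 : ℝ) = 2 := by norm_num [Nat.factorial]
  rw [this]
  have h3 : (2:ℕ) + 1 = 3 := rfl
  rw [h3]
  ring

lemma Bp_eq_W {N : ℕ} (k : ℕ →₀ ℕ) (φ : ℝ) (h2 : 2 < N) (hg2 : g ω h 2 φ ≠ 0) :
    Bp ω h N k φ = W ω h N (bump k) 2 φ := by
  have hbv : bump k 2 = k 2 + 1 := by rw [bump_apply, if_pos rfl]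
  rw [Bp, W, trm, hbv, Ek_bump h2, Mk_bump h2, Pp_bump ω h h2 φ]
  have hz : g ω h 2 φ ^ (-(1 + ((Mk N k + 2 : ℕ) : ℤ))) =
      g ω h 2 φ ^ (-(1 + (Mk N k : ℤ)) - 1) * (g ω h 2 φ)⁻¹ := by
    rw [← zpow_sub_one₀ hg2]
    congr 1
    push_cast
    ring
  rw [hz]
  set G1 := g ω h 2 φ ^ (-(1 + (Mk N k : ℤ)) - 1) with hG1
  have hf : ((Mk N k + 2).factorial : ℝ) =
      ((Mk N k : ℝ) + 2) * ((Mk N k : ℝ) + 1) * ((Mk N k).factorial : ℝ) := by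
    rw [show Mk N k + 2 = (Mk N k + 1) + 1 from rfl, Nat.factorial_succ, Nat.factorial_succ]
    push_cast
    ring
  rw [hf, pow_succ]
  have hM2 : ((Mk N k : ℝ) + 2) ≠ 0 := by positivity
  have hk2 : (2 * ((k 2 : ℝ) + 1)) ≠ 0 := by positivity
  push_cast
  field_simp
  ring

lemma Pp_shift {k : ℕ →₀ ℕ} {N j : ℕ} (hj1 : j + 1 < N) (φ : ℝ) :
    Pp ω h N (shift k j) φ = uu ω h j (k j - 1) φ * (uu ω h (j+1) (k (j+1) + 1) φ *
      ∏ i ∈ ((range N).erase j).erase (j+1), uu ω h i (k i) φ) := by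
  unfold Pp
  exact prod_shift k (by omega) hj1 (fun i m => uu ω h i m φ)

lemma Sp_eq_W {N j : ℕ} (k : ℕ →₀ ℕ) (φ : ℝ) (h2j : 2 ≤ j) (hj1 : j + 1 < N)
    (h1 : 1 ≤ k j) (hg2 : g ω h 2 φ ≠ 0) :
    Sp ω h N k j φ = W ω h N (shift k j) (j+1) φ := by
  obtain ⟨m, hm⟩ : ∃ m, k j = m + 1 := ⟨k j - 1, by omega⟩
  have hsv : shift k j (j+1) = k (j+1) + 1 := by
    rw [shift_apply, if_neg (by omega), if_pos rfl]
  have hext : j + 1 ∈ (range N).erase j :=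
    Finset.mem_erase.mpr ⟨by omega, Finset.mem_range.mpr hj1⟩
  rw [Sp, W, trm, hsv, Ek_shift hj1 h1, Mk_shift hj1 h1, Pp_shift ω h hj1 φ,
    prod_extract hext (fun i => uu ω h i (k i) φ)]
  rw [hm]
  simp only [Nat.add_sub_cancel]
  have hz : g ω h 2 φ ^ (-(1 + ((Mk N k + 1 : ℕ) : ℤ))) =
      g ω h 2 φ ^ (-(1 + (Mk N k : ℤ))) * (g ω h 2 φ)⁻¹ := by
    rw [← zpow_sub_one₀ hg2]
    congr 1
    push_cast
    ring
  rw [hz]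
  set G1 := g ω h 2 φ ^ (-(1 + (Mk N k : ℤ))) with hG1
  set R := ∏ i ∈ ((range N).erase j).erase (j+1), uu ω h i (k i) φ with hR
  simp only [uu, uD, Nat.add_sub_cancel, show j+1+1 = j+2 from rfl]
  have hfj : (j.factorial : ℝ) ≠ 0 := Nat.cast_ne_zero.mpr j.factorial_ne_zero
  have hfm : (m.factorial : ℝ) ≠ 0 := Nat.cast_ne_zero.mpr m.factorial_ne_zero
  have hfc : ((k (j+1)).factorial : ℝ) ≠ 0 :=
    Nat.cast_ne_zero.mpr (k (j+1)).factorial_ne_zero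
  have hM1 : ((Mk N k : ℝ) + 1) ≠ 0 := by positivity
  have hfj1 : ((j:ℝ) + 1) ≠ 0 := by positivity
  have hc1 : ((k (j+1) : ℝ) + 1) ≠ 0 := by positivity
  have hm1 : ((m:ℝ) + 1) ≠ 0 := by positivity
  have hfac1 : ((Mk N k + 1).factorial : ℝ) = ((Mk N k : ℝ) + 1) * ((Mk N k).factorial : ℝ) := by
    rw [Nat.factorial_succ]; push_cast; ring
  have hfac2 : ((m + 1).factorial : ℝ) = ((m:ℝ) + 1) * (m.factorial : ℝ) := by
    rw [Nat.factorial_succ]; push_cast; ring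
  have hfac3 : ((k (j+1) + 1).factorial : ℝ) =
      ((k (j+1) : ℝ) + 1) * ((k (j+1)).factorial : ℝ) := by
    rw [Nat.factorial_succ]; push_cast; ring
  have hfac4 : ((j+1).factorial : ℝ) = ((j:ℝ) + 1) * (j.factorial : ℝ) := by
    rw [Nat.factorial_succ]; push_cast; ring
  rw [hfac1, hfac2, hfac3, hfac4]
  push_cast
  field_simp
  ring

lemma Sp_zero {N j : ℕ} (k : ℕ →₀ ℕ) (φ : ℝ) (hkj : k j = 0) :
    Sp ω h N k j φ = 0 := by
  simp [Sp, uD, hkj]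

lemma W_zero {N i : ℕ} (k : ℕ →₀ ℕ) (φ : ℝ) (hki : k i = 0) :
    W ω h N k i φ = 0 := by
  simp [W, hki]

lemma Mk_ne_zero {n N : ℕ} {k : ℕ →₀ ℕ} (hn : 1 ≤ n) (hk : Cond (n+1) k)
    (hN : n + 2 ≤ N) : Mk N k ≠ 0 := by
  have hsum : ∑ i ∈ range N, (i - 1) * k i = n := by
    have := cond_sum_range hk (by omega : (n+1) + 1 ≤ N)
    simpa using this
  intro h0
  have hle : (n : ℕ) ≤ Mk N k := by
    rw [← hsum]
    exact Finset.sum_le_sum fun i _ => Nat.mul_le_mul_right _ (by omega)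
  omega

lemma W_sum {n N : ℕ} {k : ℕ →₀ ℕ} (hn : 1 ≤ n) (hk : Cond (n+1) k)
    (hN : n + 2 ≤ N) (φ : ℝ) :
    ∑ i ∈ range N, W ω h N k i φ = trm ω h N k φ := by
  have hM : (Mk N k : ℝ) ≠ 0 := Nat.cast_ne_zero.mpr (Mk_ne_zero hn hk hN)
  unfold W
  rw [← Finset.sum_mul, ← Finset.sum_div]
  have : ∑ i ∈ range N, ((i * k i : ℕ) : ℝ) = ((Mk N k : ℕ) : ℝ) := by
    rw [Mk]
    push_cast
    rfl
  rw [this, div_self hM, one_mul]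

noncomputable def term (k : ℕ →₀ ℕ) (φ : ℝ) : ℝ :=
  (-1:ℝ) ^ (∑ j ∈ k.support, k j) * ((∑ j ∈ k.support, j * k j).factorial : ℝ) *
    g ω h 2 φ ^ (-(1 + (∑ j ∈ k.support, j * k j : ℕ) : ℤ)) *
    ∏ j ∈ k.support,
      (g ω h (j+1) φ ^ (k j) / ((j.factorial : ℝ) ^ (k j) * ((k j).factorial : ℝ)))

lemma term_eq_trm {N : ℕ} (k : ℕ →₀ ℕ) (hs : k.support ⊆ range N) (φ : ℝ) :
    term ω h k φ = trm ω h N k φ := by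
  have hE : ∑ j ∈ k.support, k j = Ek N k :=
    Finset.sum_subset hs (fun j _ hj => Finsupp.notMem_support_iff.mp hj)
  have hM : ∑ j ∈ k.support, j * k j = Mk N k :=
    Finset.sum_subset hs (fun j _ hj => by
      rw [Finsupp.notMem_support_iff.mp hj, mul_zero])
  have hP : ∏ j ∈ k.support,
      (g ω h (j+1) φ ^ (k j) / ((j.factorial : ℝ) ^ (k j) * ((k j).factorial : ℝ))) =
      Pp ω h N k φ := by
    unfold Pp uu
    exact Finset.prod_subset hs (fun j _ hj => by
      rw [Finsupp.notMem_support_iff.mp hj]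
      simp)
  rw [term, trm, hE, hM, hP]

lemma TT_one : TT 1 = {0} := by
  ext k
  rw [mem_TT, Finset.mem_singleton]
  constructor
  · rintro ⟨h2, hsum⟩
    by_contra hne
    obtain ⟨j, hj⟩ : ∃ j, j ∈ k.support := by
      rcases Finset.eq_empty_or_nonempty k.support with he | ⟨j, hj⟩
      · exact absurd (Finsupp.support_eq_empty.mp he) hne
      · exact ⟨j, hj⟩
    have h2j := h2 j hj
    have h1 : 1 ≤ k j := Nat.one_le_iff_ne_zero.mpr (Finsupp.mem_support_iff.mp hj)
    have hle : (j - 1) * k j = 0 := by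
      have h0 : ∑ i ∈ k.support, (i-1) * k i = 0 := by rw [hsum]
      exact Finset.sum_eq_zero_iff.mp h0 j hj
    have hpos : 0 < (j - 1) * k j := Nat.mul_pos (by omega) (by omega)
    omega
  · rintro rfl
    exact ⟨by simp, by simp⟩

section Main
variable (hω : ContDiff ℝ (⊤ : ℕ∞) ω) (hh : ContDiff ℝ (⊤ : ℕ∞) h)
  (hinv₁ : ∀ φ : ℝ, deriv ω (h φ) = φ)
  (hω₂ : ∀ φ : ℝ, iteratedDeriv 2 ω (h φ) ≠ 0)

include hω hh hinv₁ hω₂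

lemma master (n : ℕ) (hn : 1 ≤ n) :
    ∀ φ : ℝ, iteratedDeriv n h φ = ∑ k ∈ TT n, term ω h k φ := by
  induction n, hn using Nat.le_induction with
  | base =>
    intro φ
    rw [TT_one, Finset.sum_singleton]
    have hd := hasDerivAt_h ω h hω hh hinv₁ hω₂ φ
    rw [iteratedDeriv_one, hd.deriv, term]
    simp [zpow_neg_one]
  | succ n hn IH =>
    intro φ
    classical
    have hfun : iteratedDeriv n h = fun ψ => ∑ k ∈ TT n, trm ω h (n+3) k ψ := by
      funext ψ
      rw [IH ψ]
      exact Finset.sum_congr rfl fun k hk => term_eq_trm ω h k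
        ((support_bound (mem_TT.mp hk)).1.trans (Finset.range_subset_range.mpr (by omega))) ψ
    have hder : HasDerivAt (fun ψ => ∑ k ∈ TT n, trm ω h (n+3) k ψ)
        (∑ k ∈ TT n, (Bp ω h (n+3) k φ + ∑ j ∈ range (n+3), Sp ω h (n+3) k j φ)) φ :=
      HasDerivAt.fun_sum fun k _ => hasDerivAt_trm ω h hω hh hinv₁ hω₂ (n+3) k φ
    rw [iteratedDeriv_succ, hfun, hder.deriv, Finset.sum_add_distrib]
    have claimA : ∑ k ∈ TT n, Bp ω h (n+3) k φ =
        ∑ k' ∈ TT (n+1), W ω h (n+3) k' 2 φ := by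
      have hzero : ∑ k' ∈ (TT (n+1)).filter (fun k' => k' 2 ≠ 0), W ω h (n+3) k' 2 φ =
          ∑ k' ∈ TT (n+1), W ω h (n+3) k' 2 φ :=
        Finset.sum_filter_of_ne (fun k' _ hW h0 => hW (W_zero ω h k' φ h0))
      rw [← hzero]
      refine Finset.sum_nbij' (fun k => bump k) (fun k' => unbump k') ?_ ?_ ?_ ?_ ?_
      · intro k hk
        refine Finset.mem_filter.mpr ⟨mem_TT.mpr (cond_bump hn (mem_TT.mp hk)), ?_⟩
        rw [bump_apply, if_pos rfl]
        omega
      · intro k' hk'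
        obtain ⟨hk'm, hk'2⟩ := Finset.mem_filter.mp hk'
        exact mem_TT.mpr (cond_unbump hn (mem_TT.mp hk'm) (by omega))
      · intro k _
        exact unbump_bump k
      · intro k' hk'
        obtain ⟨hk'm, hk'2⟩ := Finset.mem_filter.mp hk'
        exact bump_unbump (by omega)
      · intro k hk
        exact Bp_eq_W ω h k φ (by omega) (hω₂ φ)
    have claimB : ∑ k ∈ TT n, ∑ j ∈ range (n+3), Sp ω h (n+3) k j φ =
        ∑ k' ∈ TT (n+1), ∑ i ∈ (range (n+3)).erase 2, W ω h (n+3) k' i φ := by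
      rw [← Finset.sum_product' (s := TT n) (t := range (n+3))
        (f := fun k j => Sp ω h (n+3) k j φ)]
      rw [← Finset.sum_product' (s := TT (n+1)) (t := (range (n+3)).erase 2)
        (f := fun k' i => W ω h (n+3) k' i φ)]
      have hz1 : ∑ p ∈ ((TT n) ×ˢ range (n+3)).filter (fun p => p.1 p.2 ≠ 0),
          Sp ω h (n+3) p.1 p.2 φ =
          ∑ p ∈ (TT n) ×ˢ range (n+3), Sp ω h (n+3) p.1 p.2 φ :=
        Finset.sum_filter_of_ne (fun p _ hS h0 => hS (Sp_zero ω h p.1 φ h0))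
      have hz2 : ∑ p ∈ ((TT (n+1)) ×ˢ ((range (n+3)).erase 2)).filter
            (fun p => p.1 p.2 ≠ 0), W ω h (n+3) p.1 p.2 φ =
          ∑ p ∈ (TT (n+1)) ×ˢ ((range (n+3)).erase 2), W ω h (n+3) p.1 p.2 φ :=
        Finset.sum_filter_of_ne (fun p _ hW h0 => hW (W_zero ω h p.1 φ h0))
      rw [← hz1, ← hz2]
      refine Finset.sum_nbij' (fun p => (shift p.1 p.2, p.2 + 1))
        (fun p => (unshift p.1 p.2, p.2 - 1)) ?_ ?_ ?_ ?_ ?_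
      · rintro ⟨k, j⟩ hp
        dsimp only
        obtain ⟨hmem, hne⟩ := Finset.mem_filter.mp hp
        obtain ⟨hk, hj⟩ := Finset.mem_product.mp hmem
        simp only at hne hk hj
        have hkT := mem_TT.mp hk
        have hsupp : j ∈ k.support := Finsupp.mem_support_iff.mpr hne
        have h2j : 2 ≤ j := hkT.1 j hsupp
        have hjn : j < n + 1 := Finset.mem_range.mp ((support_bound hkT).1 hsupp)
        refine Finset.mem_filter.mpr ⟨Finset.mem_product.mpr
          ⟨mem_TT.mpr (cond_shift hn hkT hsupp), Finset.mem_erase.mpr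
            ⟨by omega, Finset.mem_range.mpr (by omega)⟩⟩, ?_⟩
        show shift k j (j+1) ≠ 0
        rw [shift_apply, if_neg (by omega), if_pos rfl]
        omega
      · rintro ⟨k', i⟩ hp
        dsimp only
        obtain ⟨hmem, hne⟩ := Finset.mem_filter.mp hp
        obtain ⟨hk', hi⟩ := Finset.mem_product.mp hmem
        simp only at hne hk' hi
        have hk'T := mem_TT.mp hk'
        have hsupp : i ∈ k'.support := Finsupp.mem_support_iff.mpr hne
        have h2i : 2 ≤ i := hk'T.1 i hsupp
        have hine : i ≠ 2 := Finset.ne_of_mem_erase hi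
        have hi3 : 3 ≤ i := by omega
        have hin : i < n + 2 := Finset.mem_range.mp ((support_bound hk'T).1 hsupp)
        refine Finset.mem_filter.mpr ⟨Finset.mem_product.mpr
          ⟨mem_TT.mpr (cond_unshift hn hk'T hi3 (by omega)),
            Finset.mem_range.mpr (by omega)⟩, ?_⟩
        show unshift k' i (i - 1) ≠ 0
        rw [unshift_apply _ (by omega), if_neg (by omega), if_pos rfl]
        omega
      · rintro ⟨k, j⟩ hp
        dsimp only
        obtain ⟨hmem, hne⟩ := Finset.mem_filter.mp hp
        simp only at hne
        have : unshift (shift k j) (j+1) = k := unshift_shift (by omega)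
        simp only [Nat.add_sub_cancel]
        exact Prod.ext (by exact this) rfl
      · rintro ⟨k', i⟩ hp
        dsimp only
        obtain ⟨hmem, hne⟩ := Finset.mem_filter.mp hp
        obtain ⟨hk', hi⟩ := Finset.mem_product.mp hmem
        simp only at hne hk' hi
        have hk'T := mem_TT.mp hk'
        have hsupp : i ∈ k'.support := Finsupp.mem_support_iff.mpr hne
        have h2i : 2 ≤ i := hk'T.1 i hsupp
        have hine : i ≠ 2 := Finset.ne_of_mem_erase hi
        have hi3 : 3 ≤ i := by omega
        have : shift (unshift k' i) (i-1) = k' := shift_unshift hi3 (by omega)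
        exact Prod.ext (by simpa using this) (by simp; omega)
      · rintro ⟨k, j⟩ hp
        dsimp only
        obtain ⟨hmem, hne⟩ := Finset.mem_filter.mp hp
        obtain ⟨hk, hj⟩ := Finset.mem_product.mp hmem
        simp only at hne hk hj
        have hkT := mem_TT.mp hk
        have hsupp : j ∈ k.support := Finsupp.mem_support_iff.mpr hne
        have h2j : 2 ≤ j := hkT.1 j hsupp
        have hjn : j < n + 1 := Finset.mem_range.mp ((support_bound hkT).1 hsupp)
        exact Sp_eq_W ω h k φ h2j (by omega) (by omega) (hω₂ φ)
    rw [claimA, claimB, ← Finset.sum_add_distrib]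
    have hcomb : ∀ k' ∈ TT (n+1), W ω h (n+3) k' 2 φ +
        ∑ i ∈ (range (n+3)).erase 2, W ω h (n+3) k' i φ = trm ω h (n+3) k' φ := by
      intro k' hk'
      rw [← sum_extract (Finset.mem_range.mpr (by omega : 2 < n+3))
        (fun i => W ω h (n+3) k' i φ)]
      exact W_sum ω h hn (mem_TT.mp hk') (by omega) φ
    rw [Finset.sum_congr rfl hcomb]
    exact Finset.sum_congr rfl fun k' hk' => (term_eq_trm ω h k'
      ((support_bound (mem_TT.mp hk')).1.trans (Finset.range_subset_range.mpr (by omega))) φ).symm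

end Main
end InvFormula

/-- Paper eqs. (0lege2)–(0lege4): the explicit formula for the `n`-th derivative of the
compositional inverse `h` of `deriv ω`, as a sum over finitely supported functions
`k : ℕ → ℕ` supported on `{2, 3, …}` with `∑_j (j-1)·k_j = n-1`. -/
theorem inverse_function_derivative_formula
    (ω h : ℝ → ℝ) (hω : ContDiff ℝ (⊤ : ℕ∞) ω) (hh : ContDiff ℝ (⊤ : ℕ∞) h)
    (hinv₁ : ∀ φ : ℝ, deriv ω (h φ) = φ)
    (hinv₂ : ∀ x : ℝ, h (deriv ω x) = x)
    (γ : ℝ → ℝ) (hγ : ∀ φ : ℝ, γ φ = φ * h φ - ω (h φ))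
    (hω₂ : ∀ φ : ℝ, iteratedDeriv 2 ω (h φ) ≠ 0)
    (n : ℕ) (hn : 1 ≤ n) (φ : ℝ) :
    iteratedDeriv n h φ =
      ∑ᶠ k ∈ {k : ℕ →₀ ℕ | (∀ j ∈ k.support, 2 ≤ j) ∧
          ∑ j ∈ k.support, (j - 1) * k j = n - 1},
        (-1 : ℝ) ^ (∑ j ∈ k.support, k j) *
          ((∑ j ∈ k.support, j * k j).factorial : ℝ) *
          (iteratedDeriv 2 ω (h φ)) ^ (-(1 + (∑ j ∈ k.support, j * k j : ℕ) : ℤ)) *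
          ∏ j ∈ k.support,
            (iteratedDeriv (j + 1) ω (h φ)) ^ (k j) /
              ((j.factorial : ℝ) ^ (k j) * ((k j).factorial : ℝ)) := by
  have hset : {k : ℕ →₀ ℕ | (∀ j ∈ k.support, 2 ≤ j) ∧
      ∑ j ∈ k.support, (j - 1) * k j = n - 1} = ↑(InvFormula.TT n) := by
    rw [InvFormula.TT, Set.Finite.coe_toFinset]
    rfl
  rw [hset, finsum_mem_coe_finset, InvFormula.master ω h hω hh hinv₁ hω₂ n hn φ]
  exact Finset.sum_congr rfl fun k _ => rfl
end

section
/- There is a group homomorphism Φ from stab(π) to Equiv.Perm (Fin n) uniquely determined by c (σ x) = Φ(σ) (c x) for all σ ∈ stab(π) and x ∈ β; its kernel is fix(π) and its range is exactly Perm(π). Consequently the quotient group stab(π) / fix(π) is isomorphic to Perm(π) (paper eq. (permpi)). -/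
/-!
A permutation `σ ∈ stab(π)` maps cells onto cells, so `c (σ x) = Φ σ (c x)` determines a
permutation `Φ σ` of the cell indices (`c` being surjective), and `σ ↦ Φ σ` is a homomorphism
with kernel `fix(π)`. For the range, record each `y` by its cell and its
`≈`-class, `g y = (c y, ⟦y⟧)`: a permutation `σ` of `β` lies in `stab(π)` with `Φ σ = τ` exactly
when `g ∘ σ = (τ × id) ∘ g`, and such a `σ` exists iff `τ × id` preserves the sizes of the
fibers of `g`, which is the defining condition of `Perm(π)`.
-/

open Function Equiv

theorem exists_perm_semiconj_iff_card_fiber_eq {β κ : Type*} [Finite β] (g : β → κ)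
    (ρ : Perm κ) :
    (∃ σ : Perm β, Semiconj g σ ρ) ↔
      ∀ p, Nat.card {b // g b = p} = Nat.card {b // g b = ρ p} := by
  constructor
  · rintro ⟨σ, hσ⟩ p
    exact Nat.card_congr <| σ.subtypeEquiv fun b => by rw [hσ b, ρ.apply_eq_iff_eq]
  · intro hcard
    have fiber_equiv : ∀ p, {b // ρ (g b) = p} ≃ {b // g b = p} := fun p =>
      (subtypeEquivRight fun b => ρ.eq_symm_apply.symm).trans <|
        Nonempty.some <| Finite.card_eq.mp <| by rw [hcard, apply_symm_apply]
    exact ⟨ofFiberEquiv fiber_equiv, ofFiberEquiv_map fiber_equiv⟩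

namespace FiberPerm

variable {β ι : Type*} {c : β → ι} (hc : Surjective c)

/-- Only meaningful when `σ` maps cells into cells; otherwise it depends on the choice of
`surjInv hc`. -/
noncomputable def fiberMap (σ : Perm β) (i : ι) : ι := c (σ (surjInv hc i))

theorem fiberMap_apply {σ : Perm β} (hσ : ∀ x y, c x = c y → c (σ x) = c (σ y)) (x : β) :
    fiberMap hc σ (c x) = c (σ x) :=
  hσ _ _ (surjInv_eq hc _)

theorem fiberMap_one (i : ι) : fiberMap hc 1 i = i :=
  surjInv_eq hc i

theorem fiberMap_mul {σ : Perm β} (hσ : ∀ x y, c x = c y → c (σ x) = c (σ y)) (τ : Perm β)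
    (i : ι) : fiberMap hc (σ * τ) i = fiberMap hc σ (fiberMap hc τ i) :=
  (fiberMap_apply hc hσ _).symm

theorem fiberMap_inv_rightInverse {σ : Perm β} (hσ : ∀ x y, c x = c y → c (σ x) = c (σ y)) :
    RightInverse (fiberMap hc σ⁻¹) (fiberMap hc σ) := fun i => by
  rw [← fiberMap_mul hc hσ, mul_inv_cancel, fiberMap_one]

variable (H : Subgroup (Perm β)) (hH : ∀ σ ∈ H, ∀ x y, c x = c y → c (σ x) = c (σ y))

noncomputable def fiberPermHom : H →* Perm ι where
  toFun σ :=
    { toFun := fiberMap hc σ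
      invFun := fiberMap hc (σ : Perm β)⁻¹
      left_inv := inv_inv (σ : Perm β) ▸ fiberMap_inv_rightInverse hc (hH _ (inv_mem σ.2))
      right_inv := fiberMap_inv_rightInverse hc (hH _ σ.2) }
  map_one' := Equiv.ext (fiberMap_one hc)
  map_mul' σ τ := Equiv.ext (fiberMap_mul hc (hH _ σ.2) τ)

theorem fiberPermHom_apply (σ : H) (x : β) :
    fiberPermHom hc H hH σ (c x) = c ((σ : Perm β) x) :=
  fiberMap_apply hc (hH _ σ.2) x

theorem fiberPermHom_eq_iff (σ : H) (τ : Perm ι) :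
    fiberPermHom hc H hH σ = τ ↔ Semiconj c (σ : Perm β) τ := by
  rw [Equiv.ext_iff, hc.forall]
  simp only [fiberPermHom_apply, Semiconj]

theorem eq_fiberPermHom {Φ : H →* Perm ι} (hΦ : ∀ (σ : H) x, c (σ.1 x) = Φ σ (c x)) :
    Φ = fiberPermHom hc H hH :=
  MonoidHom.ext fun σ => ((fiberPermHom_eq_iff hc H hH σ _).mpr (hΦ σ)).symm

theorem mem_range_fiberPermHom_iff (s : Setoid β)
    (hstab : ∀ σ : Perm β, σ ∈ H ↔ (∀ x, s.r (σ x) x) ∧ ∀ x y, (c x = c y ↔ c (σ x) = c (σ y)))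
    (τ : Perm ι) :
    τ ∈ (fiberPermHom hc H hH).range ↔
      ∃ σ : Perm β, Semiconj (fun y => (c y, Quotient.mk s y)) σ (τ.prodCongr (Equiv.refl _)) := by
  constructor
  · rintro ⟨σ, hστ⟩
    exact ⟨σ, fun x => Prod.ext ((fiberPermHom_eq_iff hc H hH σ τ).mp hστ x)
      (Quotient.sound (((hstab σ).mp σ.2).1 x))⟩
  · rintro ⟨σ, hσ⟩
    have hcell x : c (σ x) = τ (c x) := congrArg Prod.fst (hσ x)
    have hmem : σ ∈ H := (hstab σ).mpr ⟨fun x => Quotient.exact (congrArg Prod.snd (hσ x)),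
      fun x y => by rw [hcell, hcell, τ.apply_eq_iff_eq]⟩
    exact ⟨⟨σ, hmem⟩, (fiberPermHom_eq_iff hc H hH _ τ).mpr hcell⟩

end FiberPerm

theorem card_cell_inter_class_eq_card_fiber {β ι : Type*} (s : Setoid β) (c : β → ι) (i : ι)
    (x : β) :
    Nat.card {y : β | c y = i ∧ s.r y x} =
      Nat.card {y // (c y, Quotient.mk s y) = (i, Quotient.mk s x)} :=
  Nat.card_congr <| subtypeEquivRight fun y => by
    simp only [Prod.mk.injEq, Quotient.eq]; rfl

/-- Paper eq. (permpi): there is a group homomorphism `Φ : stab(π) →* Equiv.Perm (Fin n)`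
uniquely determined by `c (σ x) = Φ σ (c x)`; its kernel is `fix(π)`, its range is
`Perm(π)` (permutations of equivalent cells), and hence `stab(π)/fix(π) ≅ Perm(π)`. -/
theorem stab_quotient_fix_iso_permPi
    (β : Type*) [Fintype β] (s : Setoid β) (n : ℕ) (c : β → Fin n)
    (hc : Function.Surjective c)
    (stabπ fixπ : Subgroup (Equiv.Perm β))
    (hstab : ∀ σ : Equiv.Perm β, σ ∈ stabπ ↔
      ((∀ x, s.r (σ x) x) ∧ ∀ x y, (c x = c y ↔ c (σ x) = c (σ y))))
    (hfix : ∀ σ : Equiv.Perm β, σ ∈ fixπ ↔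
      ((∀ x, s.r (σ x) x) ∧ ∀ x, c (σ x) = c x))
    (Permπ : Subgroup (Equiv.Perm (Fin n)))
    (hPerm : ∀ τ : Equiv.Perm (Fin n), τ ∈ Permπ ↔
      ∀ (i : Fin n) (x : β),
        Nat.card {y : β | c y = i ∧ s.r y x} =
          Nat.card {y : β | c y = τ i ∧ s.r y x}) :
    ∃ Φ : ↥stabπ →* Equiv.Perm (Fin n),
      (∀ (σ : ↥stabπ) (x : β), c ((σ : Equiv.Perm β) x) = Φ σ (c x)) ∧
      (∀ Φ' : ↥stabπ →* Equiv.Perm (Fin n),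
        (∀ (σ : ↥stabπ) (x : β), c ((σ : Equiv.Perm β) x) = Φ' σ (c x)) → Φ' = Φ) ∧
      Φ.ker = fixπ.subgroupOf stabπ ∧
      Φ.range = Permπ ∧
      Nonempty ((↥stabπ ⧸ Φ.ker) ≃* ↥Permπ) := by
  have hH : ∀ σ ∈ stabπ, ∀ x y, c x = c y → c (σ x) = c (σ y) :=
    fun σ hσ x y => (((hstab σ).mp hσ).2 x y).mp
  set Φ := FiberPerm.fiberPermHom hc stabπ hH
  have hker : Φ.ker = fixπ.subgroupOf stabπ := by
    ext σ
    rw [MonoidHom.mem_ker, FiberPerm.fiberPermHom_eq_iff, Subgroup.mem_subgroupOf, hfix]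
    exact (and_iff_right ((hstab σ).mp σ.2).1).symm
  have hrange : Φ.range = Permπ := by
    ext τ
    rw [FiberPerm.mem_range_fiberPermHom_iff hc stabπ hH s hstab,
      exists_perm_semiconj_iff_card_fiber_eq, hPerm]
    simp only [Prod.forall, Quotient.forall, card_cell_inter_class_eq_card_fiber]
    rfl
  exact ⟨Φ, fun σ x => (FiberPerm.fiberPermHom_apply hc stabπ hH σ x).symm,
    fun _ => FiberPerm.eq_fiberPermHom hc stabπ hH, hker, hrange,
    ⟨(QuotientGroup.quotientKerEquivRange Φ).trans (MulEquiv.subgroupCongr hrange)⟩⟩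
end

section
/- For every subgroup A of Perm(π), the product Nat.card fix(π) * Nat.card A divides Nat.card P. (In the paper's terms: for any labeled tree T whose automorphism group Aut(T) is a subgroup of Perm(π), the ratio |Perm(B)| / Sym(T) with Sym(T) = |Aut(T)| · |fix(π)| is a positive integer — paper eqs. (BTratio) and (BTratio2).) -/
/-!
Let `K` be the group of pairs `(σ, τ)` with `σ ∈ Perm(B)`, `τ ∈ A` and `c ∘ σ = τ ∘ c`.
Projecting to `τ` maps `K` onto `A` with kernel `fix(π)`: a `τ ∈ Perm(π)` lifts to some `σ`
because `τ` preserves the sizes of the fibres of `y ↦ (class of y, c y)`, so these fibres can be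
matched bijectively. Projecting to `σ` is injective since `c` is surjective, and lands in
`Perm(B)`. Hence `|fix(π)| · |A| = |K|` divides `|Perm(B)|` by Lagrange.
-/

open Equiv Function

namespace Subgroup

variable {G H : Type*} [Group G] [Group H] (K : Subgroup (G × H))

theorem card_comap_inl_mul_card_map_snd :
    Nat.card (K.comap (MonoidHom.inl G H)) * Nat.card (K.map (MonoidHom.snd G H)) =
      Nat.card K := by
  set f := (MonoidHom.snd G H).comp K.subtype
  have hker : K.comap (MonoidHom.inl G H) ≃ f.ker :=
    { toFun := fun g => ⟨⟨(g.1, 1), g.2⟩, rfl⟩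
      invFun := fun k => ⟨k.1.1.1, by
        have hk : (k.1.1.1, (1 : H)) = k.1.1 := Prod.ext rfl k.2.symm
        rw [mem_comap, MonoidHom.inl_apply, hk]
        exact k.1.2⟩
      left_inv := fun _ => rfl
      right_inv := fun k => Subtype.ext (Subtype.ext (Prod.ext rfl k.2.symm)) }
  have hrange : f.range = K.map (MonoidHom.snd G H) := by
    rw [MonoidHom.range_comp, range_subtype]
  rw [Nat.card_congr hker, ← hrange, ← index_ker, card_mul_index]

theorem card_map_fst_of_comap_inr_eq_bot {K : Subgroup (G × H)}
    (hK : K.comap (MonoidHom.inr G H) = ⊥) :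
    Nat.card (K.map (MonoidHom.fst G H)) = Nat.card K := by
  set f := (MonoidHom.fst G H).comp K.subtype
  have hf : Injective f := by
    rw [← MonoidHom.ker_eq_bot_iff, eq_bot_iff]
    rintro ⟨⟨g, h⟩, hk⟩ (rfl : g = 1)
    obtain rfl := (eq_bot_iff_forall _).mp hK h hk
    rfl
  have hrange : f.range = K.map (MonoidHom.fst G H) := by
    rw [MonoidHom.range_comp, range_subtype]
  rw [← hrange]
  exact Nat.card_congr (MonoidHom.ofInjective hf).toEquiv.symm

end Subgroup

namespace Equiv.Perm

variable {α ι : Type*}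

def semiconjSubgroup (c : α → ι) : Subgroup (Perm α × Perm ι) where
  carrier := {p | Semiconj c p.1 p.2}
  one_mem' := Semiconj.id_right
  mul_mem' h₁ h₂ := h₁.comp_right h₂
  inv_mem' {p} h := h.inverses_right p.1.apply_symm_apply p.2.symm_apply_apply

theorem mem_semiconjSubgroup {c : α → ι} {p : Perm α × Perm ι} :
    p ∈ semiconjSubgroup c ↔ Semiconj c p.1 p.2 :=
  Iff.rfl

theorem exists_semiconj_of_card_fiber_eq [Finite α] (c : α → ι) (τ : Perm ι)
    (h : ∀ i, Nat.card {x // c x = i} = Nat.card {x // c x = τ i}) :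
    ∃ σ : Perm α, Semiconj c σ τ := by
  have hfiber : ∀ i, Nonempty ({x // τ (c x) = i} ≃ {x // c x = i}) := fun i => by
    refine Finite.card_eq.mp ?_
    calc Nat.card {x // τ (c x) = i}
        = Nat.card {x // c x = τ.symm i} :=
          Nat.card_congr (subtypeEquivRight fun _ => τ.eq_symm_apply.symm)
      _ = Nat.card {x // c x = i} := by rw [h, apply_symm_apply]
  exact ⟨ofFiberEquiv fun i => (hfiber i).some, ofFiberEquiv_map _⟩

theorem exists_semiconj_rel_of_card_eq [Finite α] (s : Setoid α) (c : α → ι) (τ : Perm ι)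
    (h : ∀ (i : ι) (x : α),
      Nat.card {y : α | c y = i ∧ s.r y x} = Nat.card {y : α | c y = τ i ∧ s.r y x}) :
    ∃ σ : Perm α, (∀ x, s.r (σ x) x) ∧ Semiconj c σ τ := by
  have hfiber : ∀ (i : ι) (x : α),
      {y // (Quotient.mk s y, c y) = (Quotient.mk s x, i)} ≃ {y : α | c y = i ∧ s.r y x} :=
    fun i x => subtypeEquivRight fun y => by
      simp only [Prod.mk.injEq, Quotient.eq, Set.mem_ofPred_eq]
      exact and_comm
  obtain ⟨σ, hσ⟩ := exists_semiconj_of_card_fiber_eq (fun y => (Quotient.mk s y, c y))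
    ((Equiv.refl _).prodCongr τ) <| by
      rintro ⟨q, i⟩
      induction q using Quotient.inductionOn with | h x => ?_
      rw [Nat.card_congr (hfiber i x)]
      exact (h i x).trans (Nat.card_congr (hfiber (τ i) x)).symm
  exact ⟨σ, fun x => Quotient.eq.mp (congrArg Prod.fst (hσ x)),
    fun x => congrArg Prod.snd (hσ x)⟩

end Equiv.Perm

/-- Paper eqs. (BTratio), (BTratio2): for any subgroup `A` of `Perm(π)` (such as the
automorphism group `Aut(T)` of a labeled tree), the product `|fix(π)| · |A|` divides
`|Perm(B)|`; i.e. the ratio `|Perm(B)| / Sym(T)` with `Sym(T) = |Aut(T)| · |fix(π)|`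
is a positive integer. -/
theorem permB_div_symT_integer
    (β : Type*) [Fintype β] (s : Setoid β) (n : ℕ) (c : β → Fin n)
    (hc : Function.Surjective c)
    (P : Subgroup (Equiv.Perm β))
    (hP : ∀ σ : Equiv.Perm β, σ ∈ P ↔ ∀ x, s.r (σ x) x)
    (fixπ : Subgroup (Equiv.Perm β))
    (hfix : ∀ σ : Equiv.Perm β, σ ∈ fixπ ↔
      ((∀ x, s.r (σ x) x) ∧ ∀ x, c (σ x) = c x))
    (Permπ : Subgroup (Equiv.Perm (Fin n)))
    (hPerm : ∀ τ : Equiv.Perm (Fin n), τ ∈ Permπ ↔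
      ∀ (i : Fin n) (x : β),
        Nat.card {y : β | c y = i ∧ s.r y x} =
          Nat.card {y : β | c y = τ i ∧ s.r y x})
    (A : Subgroup (Equiv.Perm (Fin n))) (hA : A ≤ Permπ) :
    Nat.card fixπ * Nat.card A ∣ Nat.card P := by
  set K := P.prod A ⊓ Perm.semiconjSubgroup c
  have hfixK : K.comap (MonoidHom.inl _ _) = fixπ := by
    ext σ
    simp only [K, Subgroup.mem_comap, Subgroup.mem_inf, Subgroup.mem_prod, MonoidHom.inl_apply,
      Perm.mem_semiconjSubgroup, Semiconj, hP, hfix, A.one_mem, and_true, Perm.one_apply]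
  have hAK : K.map (MonoidHom.snd _ _) = A := by
    refine le_antisymm (fun τ ⟨p, hp, hpτ⟩ => hpτ ▸ hp.1.2) fun τ hτ => ?_
    obtain ⟨σ, hσs, hσc⟩ := Perm.exists_semiconj_rel_of_card_eq s c τ ((hPerm τ).mp (hA hτ))
    exact ⟨(σ, τ), ⟨⟨(hP σ).mpr hσs, hτ⟩, hσc⟩, rfl⟩
  have hPK : K.map (MonoidHom.fst _ _) ≤ P := fun σ ⟨p, hp, hpσ⟩ => hpσ ▸ hp.1.1
  have hK : K.comap (MonoidHom.inr _ _) = ⊥ :=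
    (Subgroup.eq_bot_iff_forall _).mpr fun τ hτ => Equiv.ext <| hc.forall.mpr fun x => (hτ.2 x).symm
  calc Nat.card fixπ * Nat.card A = Nat.card K := by
        rw [← hfixK, ← hAK, Subgroup.card_comap_inl_mul_card_map_snd]
    _ = Nat.card (K.map (MonoidHom.fst _ _)) :=
        (Subgroup.card_map_fst_of_comap_inr_eq_bot hK).symm
    _ ∣ Nat.card P := Subgroup.card_dvd_of_le hPK
end

section
/- The constraint set Y := {f ∈ X | 𝔇(f) = D₀ and ρ(f) = ρ₀} is invariant under the A × P action, and for any set S containing exactly one element of each orbit contained in Y, one has the identity of rational numbers ∑_{f ∈ S} (Nat.card P) / (Nat.card (stab f)) = (N_part · N_lab) / (Nat.card A). In particular the left-hand side depends on the equivalence relation ≈ only through the degree function d and is independent of the choice of e. (This is Proposition stabprop2, the key identity behind Theorem Dtheorem: ∑_{T} |Perm(B)| / Sym(T) = P(D(v), D_n) · |ν₀(D_n, ρ_n)| / |Aut(t)|.) -/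
/-!
By orbit–stabilizer, `|P| / |stab f| = |orbit f| / |A|`, so the sum counts the invariant set `Y`
orbit by orbit and equals `|Y| / |A|`. A surjection `f : Fin I → Fin n` is the same as a partition
of `Fin I` into `n` parts together with a bijection from `Fin n` onto the parts. Fixing, for each
partition `Q` with part-sum multiset `D₀`, one labelling `χ₀ Q` of its parts whose part-sums are
given by `e`, every labelling of `Q` is `χ₀ Q ∘ g` for a unique permutation `g`, and the constraint
`ρ(f) = ρ₀` becomes the constraint on `g` counted by `N_lab`. Hence `|Y| = N_part · N_lab`.
-/

open Finset Function Equiv MulAction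

section

variable {α β γ : Type*} [Fintype α] [Fintype β]

theorem exists_equiv_apply_eq_of_map_univ_eq (u : α → γ) (v : β → γ)
    (h : univ.val.map u = univ.val.map v) : ∃ σ : α ≃ β, ∀ a, v (σ a) = u a := by
  classical
  have hfiber : ∀ c, Fintype.card {a // u a = c} = Fintype.card {b // v b = c} := by
    intro c
    have hc := congrArg (Multiset.count c) h
    rw [Multiset.count_map, Multiset.count_map, ← filter_val, ← filter_val, card_val,
      card_val] at hc
    simpa only [Fintype.card_subtype, eq_comm] using hc
  exact ⟨ofFiberEquiv fun c => Fintype.equivOfCardEq (hfiber c), ofFiberEquiv_map _⟩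

theorem map_univ_val_comp_equiv (u : β → γ) (σ : α ≃ β) :
    univ.val.map (u ∘ σ) = univ.val.map u := by
  rw [← Multiset.map_map, Multiset.map_univ_val_equiv]

end

section

variable {α ι M : Type*} [Fintype α] [DecidableEq ι] [AddCommMonoid M]

def cellDegree (d : α → M) (f : α → ι) (i : ι) : M :=
  ∑ x ∈ univ.filter (fun x => f x = i), d x

theorem cellDegree_comp_perm (d : α → M) (f : α → ι) (a : Perm ι) (p : Perm α)
    (hd : ∀ x, d (p x) = d x) (j : ι) :
    cellDegree d (⇑a ∘ f ∘ ⇑p⁻¹) j = cellDegree d f (a⁻¹ j) := by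
  refine sum_equiv p⁻¹ (fun x => ?_) (fun x _ => ?_)
  · simp [Equiv.eq_symm_apply]
  · simpa using hd (p⁻¹ x)

end

namespace Finpartition

variable {α ι : Type*} [Fintype α] [DecidableEq α]

def labelOf (Q : Finpartition (univ : Finset α)) (χ : ι ≃ Q.parts) (x : α) : ι :=
  χ.symm ⟨Q.part x, Q.part_mem.2 (mem_univ x)⟩

variable {Q : Finpartition (univ : Finset α)}

theorem labelOf_eq_iff (χ : ι ≃ Q.parts) {x : α} {i : ι} :
    Q.labelOf χ x = i ↔ x ∈ (χ i : Finset α) := by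
  rw [labelOf, Equiv.symm_apply_eq, Subtype.ext_iff, Q.part_eq_iff_mem (χ i).2]

theorem filter_labelOf_eq [DecidableEq ι] (χ : ι ≃ Q.parts) (i : ι) :
    univ.filter (fun x => Q.labelOf χ x = i) = χ i := by
  ext x
  simp [labelOf_eq_iff]

theorem cellDegree_labelOf {M : Type*} [AddCommMonoid M] [DecidableEq ι] (d : α → M)
    (χ : ι ≃ Q.parts) (i : ι) : cellDegree d (Q.labelOf χ) i = ∑ x ∈ χ i, d x := by
  rw [cellDegree, filter_labelOf_eq]

theorem labelOf_surjective (χ : ι ≃ Q.parts) : Surjective (Q.labelOf χ) := fun i =>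
  let ⟨x, hx⟩ := Q.nonempty_of_mem_parts (χ i).2
  ⟨x, (labelOf_eq_iff χ).2 hx⟩

theorem labelOf_injective [DecidableEq ι] :
    Injective (Q.labelOf : (ι ≃ Q.parts) → α → ι) := fun χ χ' h =>
  Equiv.ext fun i => Subtype.ext <| by rw [← filter_labelOf_eq, ← filter_labelOf_eq, h]

theorem parts_eq_image [Fintype ι] (χ : ι ≃ Q.parts) :
    Q.parts = univ.image fun i => (χ i : Finset α) := by
  ext p
  simp only [mem_image, mem_univ, true_and]
  exact ⟨fun hp => ⟨χ.symm ⟨p, hp⟩, by simp⟩, by rintro ⟨i, rfl⟩; exact (χ i).2⟩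

theorem eq_of_labelOf_eq [Fintype ι] [DecidableEq ι] {Q' : Finpartition (univ : Finset α)}
    (χ : ι ≃ Q.parts) (χ' : ι ≃ Q'.parts) (h : Q.labelOf χ = Q'.labelOf χ') : Q = Q' := by
  ext1
  rw [Q.parts_eq_image χ, Q'.parts_eq_image χ']
  congr 1
  funext i
  rw [← filter_labelOf_eq, ← filter_labelOf_eq, h]

theorem exists_labelOf_eq {f : α → ι} (hf : Surjective f) :
    ∃ (Q : Finpartition (univ : Finset α)) (χ : ι ≃ Q.parts), Q.labelOf χ = f := by
  classical
  let Q := ofSetoid (Setoid.ker f)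
  have hfiber : ∀ a, univ.filter (fun x => f x = f a) = Q.part a := by
    intro a
    ext b
    rw [mem_part_ofSetoid_iff_rel]
    simp [eq_comm]
  let φ : ι → Q.parts := fun i =>
    ⟨univ.filter (fun x => f x = i), by
      obtain ⟨a, rfl⟩ := hf i
      rw [hfiber]
      exact Q.part_mem.2 (mem_univ a)⟩
  have hφ : Bijective φ := by
    refine ⟨fun i j hij => ?_, fun p => ?_⟩
    · obtain ⟨x, rfl⟩ := hf i
      have hx : x ∈ (φ (f x) : Finset α) := by simp [φ]
      rw [hij] at hx
      simpa [φ] using hx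
    · obtain ⟨a, -, hap⟩ := Q.part_surjOn p.2
      exact ⟨f a, Subtype.ext (by simp only [φ, hfiber, hap])⟩
  refine ⟨Q, Equiv.ofBijective φ hφ, funext fun x => (labelOf_eq_iff _).2 ?_⟩
  simp [φ]

theorem map_univ_val_equiv_parts {M : Type*} [Fintype ι] (χ : ι ≃ Q.parts) (g : Finset α → M) :
    univ.val.map (fun i => g (χ i)) = Q.parts.val.map g := by
  rw [show (fun i => g (χ i)) = (fun p : Q.parts => g p) ∘ χ from rfl,
    map_univ_val_comp_equiv, univ_eq_attach, attach_val]
  exact Multiset.attach_map_val' _ g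

theorem exists_equiv_sum_parts_eq {M : Type*} [AddCommMonoid M] [Fintype ι] (d : α → M)
    (e : ι → M) (h : Q.parts.val.map (fun p => ∑ x ∈ p, d x) = univ.val.map e) :
    ∃ χ : ι ≃ Q.parts, ∀ i, ∑ x ∈ χ i, d x = e i :=
  exists_equiv_apply_eq_of_map_univ_eq e (fun p : Q.parts => ∑ x ∈ p.1, d x) <| by
    rw [← h, ← Q.map_univ_val_equiv_parts (Equiv.refl _)]
    rfl

theorem card_parts_eq_of_equiv [Fintype ι] (χ : ι ≃ Q.parts) : Q.parts.card = Fintype.card ι :=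
  (Fintype.card_coe Q.parts).symm.trans (Fintype.card_congr χ.symm)

end Finpartition

section ConstraintSet

variable {α ι : Type*} [Fintype α] [Fintype ι] [DecidableEq ι]

def constraintSet (d : α → ℕ) (w : ι → ℕ) (D₀ ρ₀ : Multiset ℕ) : Set (α → ι) :=
  {f | Surjective f ∧ univ.val.map (cellDegree d f) = D₀ ∧
    univ.val.map (fun i => w i + cellDegree d f i) = ρ₀}

variable {d : α → ℕ} {w e : ι → ℕ} {D₀ ρ₀ : Multiset ℕ}

theorem comp_perm_mem_constraintSet {a : Perm ι} {p : Perm α} (hw : ∀ i, w (a i) = w i)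
    (hd : ∀ x, d (p x) = d x) {f : α → ι} (hf : f ∈ constraintSet d w D₀ ρ₀) :
    ⇑a ∘ f ∘ ⇑p⁻¹ ∈ constraintSet d w D₀ ρ₀ := by
  obtain ⟨hsurj, hD, hρ⟩ := hf
  have hcell : cellDegree d (⇑a ∘ f ∘ ⇑p⁻¹) = cellDegree d f ∘ ⇑a⁻¹ :=
    funext (cellDegree_comp_perm d f a p hd)
  have hweight : (fun i => w i + cellDegree d (⇑a ∘ f ∘ ⇑p⁻¹) i) =
      (fun i => w i + cellDegree d f i) ∘ ⇑a⁻¹ := by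
    funext i
    rw [hcell, comp_apply, comp_apply, ← hw (a⁻¹ i)]
    simp
  refine ⟨a.surjective.comp (hsurj.comp p⁻¹.surjective), ?_, ?_⟩
  · rw [hcell, map_univ_val_comp_equiv, hD]
  · rw [hweight, map_univ_val_comp_equiv, hρ]

theorem labelOf_mem_constraintSet [DecidableEq α] (he : univ.val.map e = D₀)
    {Q : Finpartition (univ : Finset α)} {χ : ι ≃ Q.parts} (hχ : ∀ i, ∑ x ∈ χ i, d x = e i)
    {g : Perm ι} (hg : univ.val.map (fun i => w i + e (g i)) = ρ₀) :
    Q.labelOf (g.trans χ) ∈ constraintSet d w D₀ ρ₀ := by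
  have hcell : cellDegree d (Q.labelOf (g.trans χ)) = e ∘ g := by
    funext i
    rw [Finpartition.cellDegree_labelOf, trans_apply, hχ, comp_apply]
  refine ⟨Finpartition.labelOf_surjective _, ?_, ?_⟩
  · rw [hcell, map_univ_val_comp_equiv, he]
  · simpa only [hcell, comp_apply] using hg

theorem card_constraintSet [DecidableEq α] (he : univ.val.map e = D₀) :
    Nat.card (constraintSet d w D₀ ρ₀) =
      Nat.card {Q : Finpartition (univ : Finset α) | Q.parts.card = Fintype.card ι ∧
        Q.parts.val.map (fun p => ∑ x ∈ p, d x) = D₀} *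
      Nat.card {g : Perm ι | univ.val.map (fun i => w i + e (g i)) = ρ₀} := by
  set QS := {Q : Finpartition (univ : Finset α) | Q.parts.card = Fintype.card ι ∧
    Q.parts.val.map (fun p => ∑ x ∈ p, d x) = D₀}
  set GS := {g : Perm ι | univ.val.map (fun i => w i + e (g i)) = ρ₀}
  have hlabel : ∀ Q : QS, ∃ χ : ι ≃ Q.1.parts, ∀ i, ∑ x ∈ χ i, d x = e i := fun Q =>
    Q.1.exists_equiv_sum_parts_eq d e (Q.2.2.trans he.symm)
  choose χ₀ hχ₀ using hlabel
  let Φ : QS × GS → constraintSet d w D₀ ρ₀ := fun q =>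
    ⟨q.1.1.labelOf (q.2.1.trans (χ₀ q.1)), labelOf_mem_constraintSet he (hχ₀ q.1) q.2.2⟩
  have hΦ : Bijective Φ := by
    refine ⟨?_, ?_⟩
    · rintro ⟨⟨Q, hQ⟩, ⟨g, hg⟩⟩ ⟨⟨Q', hQ'⟩, ⟨g', hg'⟩⟩ h
      have h' : Q.labelOf (g.trans (χ₀ ⟨Q, hQ⟩)) = Q'.labelOf (g'.trans (χ₀ ⟨Q', hQ'⟩)) :=
        congrArg Subtype.val h
      obtain rfl := Finpartition.eq_of_labelOf_eq _ _ h'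
      obtain rfl : g = g' := Equiv.ext fun i =>
        (χ₀ _).injective (Equiv.congr_fun (Finpartition.labelOf_injective h') i)
      rfl
    · rintro ⟨f, hsurj, hD, hρ⟩
      obtain ⟨Q, χ, rfl⟩ := Finpartition.exists_labelOf_eq hsurj
      have hcell : cellDegree d (Q.labelOf χ) = fun i => ∑ x ∈ χ i, d x :=
        funext (Finpartition.cellDegree_labelOf d χ)
      have hQ : Q ∈ QS := ⟨Q.card_parts_eq_of_equiv χ, by
        rw [← Q.map_univ_val_equiv_parts χ, ← hcell, hD]⟩
      have hg : χ.trans (χ₀ ⟨Q, hQ⟩).symm ∈ GS := by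
        have he_comp : ∀ i, e ((χ.trans (χ₀ ⟨Q, hQ⟩).symm) i) =
            cellDegree d (Q.labelOf χ) i := fun i => by
          rw [hcell, trans_apply, ← hχ₀ ⟨Q, hQ⟩, apply_symm_apply]
        simpa only [GS, Set.mem_ofPred_eq, he_comp] using hρ
      refine ⟨(⟨Q, hQ⟩, ⟨_, hg⟩), Subtype.ext ?_⟩
      simp only [Φ, trans_assoc, symm_trans_self, trans_refl]
  rw [← Nat.card_prod]
  exact (Nat.card_eq_of_bijective Φ hΦ).symm

end ConstraintSet

section OrbitSum

variable {G X : Type*} [Group G] [MulAction G X]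

theorem sum_card_orbit_eq_card [Finite X] {Y : Set X} (hY : ∀ y ∈ Y, ∀ g : G, g • y ∈ Y)
    {S : Finset X} (hSY : ∀ f ∈ S, f ∈ Y) (hS : ∀ y ∈ Y, ∃! f, f ∈ S ∧ f ∈ orbit G y) :
    ∑ f ∈ S, Nat.card (orbit G f) = Nat.card Y := by
  classical
  have := Fintype.ofFinite X
  have hunion : Y.toFinset = S.biUnion fun f => (orbit G f).toFinset := by
    ext y
    simp only [Set.mem_toFinset, mem_biUnion]
    constructor
    · intro hy
      obtain ⟨f, ⟨hf, hfy⟩, -⟩ := hS y hy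
      exact ⟨f, hf, mem_orbit_symm.1 hfy⟩
    · rintro ⟨f, hf, g, rfl⟩
      exact hY f (hSY f hf) g
  have hdisj : (S : Set X).PairwiseDisjoint fun f => (orbit G f).toFinset := by
    intro f hf f' hf' hne
    refine disjoint_left.2 fun y hy hy' => hne ?_
    rw [Set.mem_toFinset] at hy hy'
    obtain ⟨g, rfl⟩ := hy
    exact (hS _ (hY f (hSY f hf) g)).unique ⟨hf, mem_orbit_symm.1 ⟨g, rfl⟩⟩
      ⟨hf', mem_orbit_symm.1 hy'⟩
  rw [Nat.card_eq_card_toFinset, hunion, card_biUnion hdisj]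
  simp only [Nat.card_eq_card_toFinset]

end OrbitSum

section ProdAction

variable {G H X : Type*} [Group G] [Group H]

theorem card_group_div_card_stabilizer_prod [MulAction (G × H) X] [Finite G] [Finite H] (x : X) :
    (Nat.card H : ℚ) / Nat.card (stabilizer (G × H) x) =
      Nat.card (orbit (G × H) x) / Nat.card G := by
  have horbit := Nat.card_congr (orbitProdStabilizerEquivGroup (G × H) x)
  rw [Nat.card_prod, Nat.card_prod] at horbit
  have hG : (Nat.card G : ℚ) ≠ 0 := Nat.cast_ne_zero.2 Nat.card_pos.ne'
  have hstab : (Nat.card (stabilizer (G × H) x) : ℚ) ≠ 0 := Nat.cast_ne_zero.2 Nat.card_pos.ne'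
  rw [div_eq_div_iff hstab hG]
  exact_mod_cast by rw [mul_comm, horbit]

variable (G H) (α β : Type*) [MulAction G β] [MulAction H α]

abbrev prodArrowAction : MulAction (G × H) (α → β) where
  smul q f x := q.1 • f (q.2⁻¹ • x)
  one_smul f := funext fun x => show (1 : G) • f ((1 : H)⁻¹ • x) = f x by simp
  mul_smul q r f := funext fun x =>
    show (q.1 * r.1) • f ((q.2 * r.2)⁻¹ • x) = q.1 • r.1 • f (r.2⁻¹ • q.2⁻¹ • x) by
      simp [mul_smul]

end ProdAction

theorem articulation_weight_orbit_sum_general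
    (n I : ℕ)
    (A : Subgroup (Equiv.Perm (Fin n)))
    (s : Setoid (Fin I)) (d : Fin I → ℕ)
    (hd : ∀ x y : Fin I, s.r x y → d x = d y)
    (P : Subgroup (Equiv.Perm (Fin I)))
    (hP : ∀ σ : Equiv.Perm (Fin I), σ ∈ P ↔ ∀ x, s.r (σ x) x)
    (w : Fin n → ℕ) (hw : ∀ a ∈ A, ∀ i, w (a i) = w i)
    (Df : (Fin I → Fin n) → Fin n → ℕ)
    (hDf : ∀ (f : Fin I → Fin n) (i : Fin n),
      Df f i = ∑ x ∈ Finset.univ.filter (fun x => f x = i), d x)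
    (Dmul ρ : (Fin I → Fin n) → Multiset ℕ)
    (hDmul : ∀ f, Dmul f = Finset.univ.val.map (Df f))
    (hρ : ∀ f, ρ f = Finset.univ.val.map fun i => w i + Df f i)
    (D₀ ρ₀ : Multiset ℕ)
    (Y : Set (Fin I → Fin n))
    (hY : Y = {f | Function.Surjective f ∧ Dmul f = D₀ ∧ ρ f = ρ₀})
    (e : Fin n → ℕ) (he : Finset.univ.val.map e = D₀)
    (Nlab Npart : ℕ)
    (hNlab : Nlab = Nat.card {g : Equiv.Perm (Fin n) |
      Finset.univ.val.map (fun i => w i + e (g i)) = ρ₀})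
    (hNpart : Npart = Nat.card {Q : Finpartition (Finset.univ : Finset (Fin I)) |
      Q.parts.card = n ∧ Q.parts.val.map (fun part => ∑ x ∈ part, d x) = D₀}) :
    (∀ f ∈ Y, ∀ a ∈ A, ∀ p ∈ P, (⇑a ∘ f ∘ ⇑p⁻¹) ∈ Y) ∧
    (∀ S : Finset (Fin I → Fin n),
      (∀ f ∈ S, f ∈ Y) →
      (∀ g ∈ Y, ∃! f, f ∈ S ∧ ∃ a ∈ A, ∃ p ∈ P, f = ⇑a ∘ g ∘ ⇑p⁻¹) →
      ∑ f ∈ S, (Nat.card P : ℚ) /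
          (Nat.card {q : ↥A × ↥P //
            ⇑(q.1 : Equiv.Perm (Fin n)) ∘ f ∘ ⇑(q.2 : Equiv.Perm (Fin I))⁻¹ = f} : ℚ) =
        ((Npart : ℚ) * (Nlab : ℚ)) / (Nat.card A : ℚ)) := by
  obtain rfl : Df = cellDegree d := funext₂ hDf
  obtain rfl : Y = constraintSet d w D₀ ρ₀ := by
    rw [hY]
    ext f
    simp only [Set.mem_ofPred_eq, hDmul, hρ]
    rfl
  let := prodArrowAction (↥A) (↥P) (Fin I) (Fin n)
  have hinv : ∀ f ∈ constraintSet d w D₀ ρ₀, ∀ a ∈ A, ∀ p ∈ P,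
      ⇑a ∘ f ∘ ⇑p⁻¹ ∈ constraintSet d w D₀ ρ₀ := fun f hf a ha p hp =>
    comp_perm_mem_constraintSet (hw a ha) (fun x => hd _ _ ((hP p).1 hp x)) hf
  have horbit : ∀ f g, f ∈ orbit (↥A × ↥P) g ↔ ∃ a ∈ A, ∃ p ∈ P, f = ⇑a ∘ g ∘ ⇑p⁻¹ := by
    refine fun f g => ⟨?_, ?_⟩
    · rintro ⟨q, rfl⟩
      exact ⟨q.1, q.1.2, q.2, q.2.2, rfl⟩
    · rintro ⟨a, ha, p, hp, rfl⟩
      exact ⟨(⟨a, ha⟩, ⟨p, hp⟩), rfl⟩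
  have hcard : Nat.card (constraintSet d w D₀ ρ₀) = Npart * Nlab := by
    subst hNpart hNlab
    simpa only [Fintype.card_fin] using card_constraintSet (w := w) he
  refine ⟨hinv, fun S hSY hS => ?_⟩
  calc ∑ f ∈ S, (Nat.card P : ℚ) / Nat.card {q : ↥A × ↥P //
          ⇑(q.1 : Equiv.Perm (Fin n)) ∘ f ∘ ⇑(q.2 : Equiv.Perm (Fin I))⁻¹ = f}
      = ∑ f ∈ S, (Nat.card (orbit (↥A × ↥P) f) : ℚ) / Nat.card A :=
        sum_congr rfl fun f _ => card_group_div_card_stabilizer_prod f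
    _ = (Nat.card (constraintSet d w D₀ ρ₀) : ℚ) / Nat.card A := by
        rw [← sum_div, ← Nat.cast_sum, sum_card_orbit_eq_card
          (fun f hf q => hinv f hf q.1 q.1.2 q.2 q.2.2) hSY
          fun g hg => by simpa only [horbit] using hS g hg]
    _ = _ := by rw [hcard, Nat.cast_mul]

/-- Paper Proposition stabprop2 (key identity behind Theorem Dtheorem): the set
`Y = {f | f surjective, 𝔇(f) = D₀, ρ(f) = ρ₀}` is invariant under the `A × P` action
`(a,p) • f = a ∘ f ∘ p⁻¹`, and summing `|P| / |stab f|` over one representative `f` of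
each orbit inside `Y` gives `P(D(v), D_n) · |ν₀(D_n, ρ_n)| / |Aut(t)|`; in particular
the sum depends on the equivalence relation only through `d` and is independent of the
choice of `e`. -/
theorem articulation_weight_orbit_sum
    (n I : ℕ)
    (A : Subgroup (Equiv.Perm (Fin n)))
    (s : Setoid (Fin I)) (d : Fin I → ℕ)
    (hd : ∀ x y : Fin I, s.r x y → d x = d y)
    (P : Subgroup (Equiv.Perm (Fin I)))
    (hP : ∀ σ : Equiv.Perm (Fin I), σ ∈ P ↔ ∀ x, s.r (σ x) x)
    (w : Fin n → ℕ) (hw : ∀ a ∈ A, ∀ i, w (a i) = w i)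
    (Df : (Fin I → Fin n) → Fin n → ℕ)
    (hDf : ∀ (f : Fin I → Fin n) (i : Fin n),
      Df f i = ∑ x ∈ Finset.univ.filter (fun x => f x = i), d x)
    (Dmul ρ : (Fin I → Fin n) → Multiset ℕ)
    (hDmul : ∀ f, Dmul f = Finset.univ.val.map (Df f))
    (hρ : ∀ f, ρ f = Finset.univ.val.map fun i => w i + Df f i)
    (D₀ ρ₀ : Multiset ℕ) (hD₀ : Multiset.card D₀ = n)
    (Y : Set (Fin I → Fin n))
    (hY : Y = {f | Function.Surjective f ∧ Dmul f = D₀ ∧ ρ f = ρ₀})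
    (e : Fin n → ℕ) (he : Finset.univ.val.map e = D₀)
    (Nlab Npart : ℕ)
    (hNlab : Nlab = Nat.card {g : Equiv.Perm (Fin n) |
      Finset.univ.val.map (fun i => w i + e (g i)) = ρ₀})
    (hNpart : Npart = Nat.card {Q : Finpartition (Finset.univ : Finset (Fin I)) |
      Q.parts.card = n ∧ Q.parts.val.map (fun part => ∑ x ∈ part, d x) = D₀}) :
    (∀ f ∈ Y, ∀ a ∈ A, ∀ p ∈ P, (⇑a ∘ f ∘ ⇑p⁻¹) ∈ Y) ∧
    (∀ S : Finset (Fin I → Fin n),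
      (∀ f ∈ S, f ∈ Y) →
      (∀ g ∈ Y, ∃! f, f ∈ S ∧ ∃ a ∈ A, ∃ p ∈ P, f = ⇑a ∘ g ∘ ⇑p⁻¹) →
      ∑ f ∈ S, (Nat.card P : ℚ) /
          (Nat.card {q : ↥A × ↥P //
            ⇑(q.1 : Equiv.Perm (Fin n)) ∘ f ∘ ⇑(q.2 : Equiv.Perm (Fin I))⁻¹ = f} : ℚ) =
        ((Npart : ℚ) * (Nlab : ℚ)) / (Nat.card A : ℚ)) :=
  articulation_weight_orbit_sum_general n I A s d hd P hP w hw Df hDf Dmul ρ hDmul hρ D₀ ρ₀ Y hY e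
    he Nlab Npart hNlab hNpart
end

section
/- The number of permutations σ of Fin n such that for every i : Fin k and j : Fin m the cardinality of {v : Fin n | τ v = i and δ (σ v) = j} equals s' j i, is exactly (∏_i n_i !) · ∏_j ( s_j ! / ∏_i (s' j i)! ), where each factor s_j ! / ∏_i (s' j i)! is the multinomial coefficient (in particular the division is exact). (This is formula (Dtheorem2) of Theorem Dtheorem, counting |ν₀(D_n, ρ_n)|, the labeling sets with prescribed dashed-degree data.) -/
/-!
The map `σ ↦ δ ∘ σ` sends the permutations in question onto the functions `f : Fin n → Fin m`
whose joint fibre counts with `τ` are `s'`, and every such `f` (whose fibres have the sizes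
`s_j` of the fibres of `δ`) has exactly `∏_j s_j!` preimages, one for each choice of bijections
between corresponding fibres. Restricted to the `i`-th fibre of `τ`, such an `f` is an arbitrary
function with fibre sizes `s'_{·i}`, and those are counted by the multinomial coefficient, by the
same fibre count applied to `σ ↦ g ∘ σ` for one fixed `g`. So the answer is
`∏_i multinomial(s'_{·i}) · ∏_j s_j!`; multiplied by `∏_{i,j} s'_{ji}!`, both this and the claimed
formula become `∏_i n_i! · ∏_j s_j!`.
-/

open Finset
open scoped Nat

namespace Equiv

variable {α β γ : Type*}

def subtypeCompEqEquivPiFiberEquiv (f : α → γ) (g : β → γ) :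
    {e : α ≃ β // g ∘ e = f} ≃ ∀ c, ({a // f a = c} ≃ {b // g b = c}) where
  toFun e c := e.1.subtypeEquiv fun a => by rw [← congrFun e.2 a, Function.comp_apply]
  invFun E := ⟨ofFiberEquiv E, funext (ofFiberEquiv_map E)⟩
  left_inv e := rfl
  right_inv E := by
    funext c
    ext ⟨a, rfl⟩
    rfl

def arrowEquivPiFiberArrow (τ : α → γ) (β : Type*) :
    (α → β) ≃ ∀ c, ({a // τ a = c} → β) :=
  (arrowCongr (sigmaFiberEquiv τ).symm (Equiv.refl β)).trans (piCurry fun _ _ => β)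

end Equiv

section

variable {α β γ ι : Type*}

theorem Nat.card_equiv_of_card_eq [Finite α] [Finite β] (h : Nat.card α = Nat.card β) :
    Nat.card (α ≃ β) = (Nat.card α)! := by
  obtain ⟨e⟩ := Finite.card_eq.mp h
  rw [← Nat.card_perm, Nat.card_congr (Equiv.equivCongr (Equiv.refl α) e.symm)]

theorem Nat.card_subtype_eq_sum_card_and [Finite α] [Fintype ι] (τ : α → ι) (p : α → Prop) :
    Nat.card {a // p a} = ∑ i, Nat.card {a // τ a = i ∧ p a} := by
  rw [← Nat.card_congr (Equiv.sigmaFiberEquiv fun a : {a // p a} => τ a), Nat.card_sigma]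
  refine sum_congr rfl fun i _ => Nat.card_congr ?_
  exact (Equiv.subtypeSubtypeEquivSubtypeInter p (τ · = i)).trans
    (Equiv.subtypeEquivRight fun _ => and_comm)

theorem Nat.card_subtype_comp_eq_mul [Finite α] [Finite β] (f : α → β) (P : β → Prop) {d : ℕ}
    (h : ∀ b, P b → Nat.card {a // f a = b} = d) :
    Nat.card {a // P (f a)} = Nat.card {b // P b} * d := by
  have := Fintype.ofFinite {b // P b}
  have e : {a // P (f a)} ≃ Σ b : {b // P b}, {a // f a = b} :=
    ((Equiv.sigmaFiberEquiv f).symm.subtypeEquiv fun _ => Iff.rfl).trans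
      (Equiv.subtypeSigmaEquiv _ P)
  rw [Nat.card_congr e, Nat.card_sigma, sum_congr rfl fun b _ => h b.1 b.2, sum_const, smul_eq_mul,
    Finset.card_univ, ← Nat.card_eq_fintype_card]

theorem Nat.card_equiv_comp_eq [Finite α] [Finite β] [Fintype γ] {f : α → γ} {g : β → γ}
    (h : ∀ c, Nat.card {a // f a = c} = Nat.card {b // g b = c}) :
    Nat.card {e : α ≃ β // g ∘ e = f} = ∏ c, (Nat.card {a // f a = c})! := by
  rw [Nat.card_congr (Equiv.subtypeCompEqEquivPiFiberEquiv f g), Nat.card_pi]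
  exact prod_congr rfl fun c _ => Nat.card_equiv_of_card_eq (h c)

theorem Nat.card_fun_fiber_card_eq [Finite α] [Fintype β] (c : β → ℕ)
    (h : ∑ b, c b = Nat.card α) :
    Nat.card {f : α → β // ∀ b, Nat.card {a // f a = b} = c b} = multinomial univ c := by
  obtain ⟨E⟩ : Nonempty (α ≃ Σ b, Fin (c b)) := Finite.card_eq.mp (by simp [h])
  set g : α → β := fun a => (E a).1
  have hg : ∀ b, Nat.card {a // g a = b} = c b := fun b => by
    rw [Nat.card_congr ((E.subtypeEquiv fun _ => Iff.rfl).trans (Equiv.sigmaSubtype b))]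
    simp
  have hfib : ∀ f : α → β, (∀ b, Nat.card {a // f a = b} = c b) →
      Nat.card {σ : Equiv.Perm α // g ∘ σ = f} = ∏ b, (c b)! := fun f hf => by
    rw [Nat.card_equiv_comp_eq fun b => (hf b).trans (hg b).symm]
    simp only [hf]
  have hcomp : ∀ σ : Equiv.Perm α, ∀ b, Nat.card {a // (g ∘ σ) a = b} = c b := fun σ b =>
    (Nat.card_congr (σ.subtypeEquiv fun _ => Iff.rfl)).trans (hg b)
  have hperm := Nat.card_subtype_comp_eq_mul (fun σ : Equiv.Perm α => g ∘ σ) _ hfib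
  rw [Nat.card_congr (Equiv.subtypeUnivEquiv hcomp), Nat.card_perm, ← h,
    ← multinomial_spec, mul_comm] at hperm
  exact (Nat.eq_of_mul_eq_mul_right (prod_pos fun b _ => factorial_pos (c b)) hperm).symm

theorem Nat.card_fun_joint_fiber_card_eq [Finite α] [Fintype β] [Fintype ι] (τ : α → ι)
    (c : β → ι → ℕ) (h : ∀ i, ∑ b, c b i = Nat.card {a // τ a = i}) :
    Nat.card {f : α → β // ∀ i b, Nat.card {a // τ a = i ∧ f a = b} = c b i} =
      ∏ i, multinomial univ (c · i) := by
  have e : {f : α → β // ∀ i b, Nat.card {a // τ a = i ∧ f a = b} = c b i} ≃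
      ∀ i, {g : {a // τ a = i} → β // ∀ b, Nat.card {a // g a = b} = c b i} := by
    refine ((Equiv.arrowEquivPiFiberArrow τ β).subtypeEquiv fun f => ?_).trans
      (Equiv.subtypePiEquivPi (β := fun i => {a // τ a = i} → β))
    refine forall₂_congr fun i b => ?_
    rw [← Nat.card_congr (Equiv.subtypeSubtypeEquivSubtypeInter (τ · = i) (f · = b))]
    rfl
  rw [Nat.card_congr e, Nat.card_pi]
  exact prod_congr rfl fun i _ => Nat.card_fun_fiber_card_eq _ (h i)

theorem Nat.prod_multinomial_mul_prod_factorial_sum [Fintype β] [Fintype ι] (c : β → ι → ℕ) :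
    (∏ i, multinomial univ (c · i)) * ∏ b, (∑ i, c b i)! =
      (∏ i, (∑ b, c b i)!) * ∏ b, multinomial univ (c b) := by
  have hpos : 0 < ∏ b, ∏ i, (c b i)! := prod_pos fun b _ => prod_pos fun i _ => factorial_pos _
  refine Nat.eq_of_mul_eq_mul_right hpos ?_
  calc (∏ i, multinomial univ (c · i)) * (∏ b, (∑ i, c b i)!) * ∏ b, ∏ i, (c b i)!
      = (∏ i, (∏ b, (c b i)!) * multinomial univ (c · i)) * ∏ b, (∑ i, c b i)! := by
        rw [prod_comm (f := fun b i => (c b i)!), prod_mul_distrib]; ring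
    _ = (∏ i, (∑ b, c b i)!) * ∏ b, (∏ i, (c b i)!) * multinomial univ (c b) := by
        simp only [multinomial_spec]
    _ = (∏ i, (∑ b, c b i)!) * (∏ b, multinomial univ (c b)) * ∏ b, ∏ i, (c b i)! := by
        rw [prod_mul_distrib]; ring

end

/-- Paper formula (Dtheorem2): the number of permutations `σ` of `Fin n` with prescribed
counts `s' j i = #{v | τ v = i ∧ δ (σ v) = j}` equals
`(∏_i n_i!) · ∏_j (s_j! / ∏_i (s' j i)!)`, each factor being a multinomial coefficient
(so the division is exact). -/
theorem count_labeling_sets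
    (n k m : ℕ) (τ : Fin n → Fin k) (δ : Fin n → Fin m)
    (ncount : Fin k → ℕ) (hn : ∀ i, ncount i = Nat.card {v : Fin n // τ v = i})
    (scount : Fin m → ℕ) (hs : ∀ j, scount j = Nat.card {v : Fin n // δ v = j})
    (s' : Fin m → Fin k → ℕ)
    (hrow : ∀ j, ∑ i, s' j i = scount j)
    (hcol : ∀ i, ∑ j, s' j i = ncount i) :
    (∀ j, (∏ i, (s' j i).factorial) ∣ (scount j).factorial) ∧
    Nat.card {σ : Equiv.Perm (Fin n) // ∀ (i : Fin k) (j : Fin m),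
        Nat.card {v : Fin n // τ v = i ∧ δ (σ v) = j} = s' j i} =
      (∏ i, (ncount i).factorial) * ∏ j, Nat.multinomial Finset.univ (s' j) := by
  refine ⟨fun j => hrow j ▸ Nat.prod_factorial_dvd_factorial_sum _ _, ?_⟩
  have hfib : ∀ f : Fin n → Fin m,
      (∀ i j, Nat.card {v // τ v = i ∧ f v = j} = s' j i) →
      Nat.card {σ : Equiv.Perm (Fin n) // δ ∘ σ = f} = ∏ j, (scount j)! := fun f hf => by
    have hfs : ∀ j, Nat.card {v // f v = j} = scount j := fun j => by
      rw [Nat.card_subtype_eq_sum_card_and τ, ← hrow j]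
      exact sum_congr rfl fun i _ => hf i j
    rw [Nat.card_equiv_comp_eq fun j => (hfs j).trans (hs j)]
    simp only [hfs]
  calc _ = Nat.card {f : Fin n → Fin m // ∀ i j, Nat.card {v // τ v = i ∧ f v = j} = s' j i} *
        ∏ j, (scount j)! := Nat.card_subtype_comp_eq_mul (fun σ : Equiv.Perm (Fin n) => δ ∘ σ) _ hfib
    _ = (∏ i, Nat.multinomial univ (s' · i)) * ∏ j, (∑ i, s' j i)! := by
        rw [Nat.card_fun_joint_fiber_card_eq τ s' fun i => (hcol i).trans (hn i)]
        simp only [hrow]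
    _ = _ := by rw [Nat.prod_multinomial_mul_prod_factorial_sum]; simp only [hcol]
end
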